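/- arXiv:2106.08074 — 9 statements merged into one kernel-verified Lean document; each statement's English description precedes it below -/
import Mathlib

section
/- The provable-equivalence relation ≡ generated by Milner's 1-free axioms (B1)–(B7), (BKS1), (BKS2), and the rule RSP is a bisimulation equivalence on the prechart of 1-free star expressions. Concretely: if e ≡ f then (i) e ⇒ a iff f ⇒ a for all a ∈ A; (ii) whenever e →a e' there exists f' with f →a f' and e' ≡ f'; and symmetrically. -/
/-- 1-free star expressions over alphabet `A`. -/
inductive SExp (A : Type) : Type
  | act : A → SExp A
  | zero : SExp A
  | add : SExp A → SExp A → SExp A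
  | seq : SExp A → SExp A → SExp A
  | star : SExp A → SExp A → SExp A

/-- The output relation `e ⇒ a` of the operational semantics. -/
inductive SOut {A : Type} : SExp A → A → Prop
  | act (a : A) : SOut (.act a) a
  | addL {e₁ e₂ : SExp A} {a : A} : SOut e₁ a → SOut (.add e₁ e₂) a
  | addR {e₁ e₂ : SExp A} {a : A} : SOut e₂ a → SOut (.add e₁ e₂) a
  | star {e₁ e₂ : SExp A} {a : A} : SOut e₂ a → SOut (.star e₁ e₂) a

/-- The transition relation `e →a f` of the operational semantics. -/
inductive STr {A : Type} : SExp A → A → SExp A → Prop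
  | addL {e₁ e₂ f : SExp A} {a : A} : STr e₁ a f → STr (.add e₁ e₂) a f
  | addR {e₁ e₂ f : SExp A} {a : A} : STr e₂ a f → STr (.add e₁ e₂) a f
  | seqO {e₁ e₂ : SExp A} {a : A} : SOut e₁ a → STr (.seq e₁ e₂) a e₂
  | seqT {e₁ e₂ f : SExp A} {a : A} : STr e₁ a f → STr (.seq e₁ e₂) a (.seq f e₂)
  | starR {e₁ e₂ f : SExp A} {a : A} : STr e₂ a f → STr (.star e₁ e₂) a f
  | starL {e₁ e₂ f : SExp A} {a : A} : STr e₁ a f → STr (.star e₁ e₂) a (.seq f (.star e₁ e₂))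
  | starO {e₁ e₂ : SExp A} {a : A} : SOut e₁ a → STr (.star e₁ e₂) a (.star e₁ e₂)

/-- Provable equivalence: the smallest congruence containing Milner's 1-free
axioms (B1)-(B7), (BKS1), (BKS2) and closed under the rule (RSP). -/
inductive Eqv {A : Type} : SExp A → SExp A → Prop
  | refl (e : SExp A) : Eqv e e
  | symm {e f : SExp A} : Eqv e f → Eqv f e
  | trans {e f g : SExp A} : Eqv e f → Eqv f g → Eqv e g
  | addCongr {e₁ f₁ e₂ f₂ : SExp A} : Eqv e₁ f₁ → Eqv e₂ f₂ → Eqv (.add e₁ e₂) (.add f₁ f₂)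
  | seqCongr {e₁ f₁ e₂ f₂ : SExp A} : Eqv e₁ f₁ → Eqv e₂ f₂ → Eqv (.seq e₁ e₂) (.seq f₁ f₂)
  | starCongr {e₁ f₁ e₂ f₂ : SExp A} : Eqv e₁ f₁ → Eqv e₂ f₂ → Eqv (.star e₁ e₂) (.star f₁ f₂)
  | B1 (e₁ e₂ : SExp A) : Eqv (.add e₁ e₂) (.add e₂ e₁)
  | B2 (e₁ e₂ e₃ : SExp A) : Eqv (.add e₁ (.add e₂ e₃)) (.add (.add e₁ e₂) e₃)
  | B3 (e₁ : SExp A) : Eqv (.add e₁ e₁) e₁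
  | B4 (e₁ e₂ e₃ : SExp A) : Eqv (.seq (.add e₁ e₂) e₃) (.add (.seq e₁ e₃) (.seq e₂ e₃))
  | B5 (e₁ e₂ e₃ : SExp A) : Eqv (.seq e₁ (.seq e₂ e₃)) (.seq (.seq e₁ e₂) e₃)
  | B6 (e₁ : SExp A) : Eqv (.add e₁ .zero) e₁
  | B7 (e₁ : SExp A) : Eqv (.seq .zero e₁) .zero
  | BKS1 (e₁ e₂ : SExp A) : Eqv (.star e₁ e₂) (.add (.seq e₁ (.star e₁ e₂)) e₂)
  | BKS2 (e₁ e₂ e₃ : SExp A) : Eqv (.seq (.star e₁ e₂) e₃) (.star e₁ (.seq e₂ e₃))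
  | RSP {e₁ e₂ e₃ : SExp A} : Eqv e₃ (.add (.seq e₁ e₃) e₂) → Eqv e₃ (.star e₁ e₂)

/-- Generalized sum of a list of expressions (the empty sum is `0`). -/
def sumList {A : Type} (l : List (SExp A)) : SExp A := l.foldr SExp.add SExp.zero

section Aux
variable {A : Type}

lemma sout_add {e₁ e₂ : SExp A} {a : A} : SOut (.add e₁ e₂) a ↔ SOut e₁ a ∨ SOut e₂ a := by
  constructor
  · intro h
    cases h with
    | addL h => exact Or.inl h
    | addR h => exact Or.inr h
  · rintro (h | h)
    exacts [SOut.addL h, SOut.addR h]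

lemma sout_star {e₁ e₂ : SExp A} {a : A} : SOut (.star e₁ e₂) a ↔ SOut e₂ a := by
  constructor
  · intro h; cases h with | star h => exact h
  · exact SOut.star

lemma sout_seq {e₁ e₂ : SExp A} {a : A} : ¬ SOut (.seq e₁ e₂) a := by intro h; cases h

lemma sout_zero {a : A} : ¬ SOut (SExp.zero : SExp A) a := by intro h; cases h

def Bis (e f : SExp A) : Prop :=
  (∀ a, SOut e a ↔ SOut f a) ∧
  (∀ a e', STr e a e' → ∃ f', STr f a f' ∧ Eqv e' f') ∧
  (∀ a f', STr f a f' → ∃ e', STr e a e' ∧ Eqv e' f')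

lemma eqv_bis {e f : SExp A} (h : Eqv e f) : Bis e f := by
  induction h with
  | refl e =>
    exact ⟨fun a => Iff.rfl, fun a e' h => ⟨e', h, Eqv.refl _⟩,
      fun a f' h => ⟨f', h, Eqv.refl _⟩⟩
  | symm h ih =>
    refine ⟨fun a => (ih.1 a).symm, ?_, ?_⟩
    · intro a e' htr
      obtain ⟨g, hg, hge⟩ := ih.2.2 a e' htr
      exact ⟨g, hg, hge.symm⟩
    · intro a f' htr
      obtain ⟨g, hg, hge⟩ := ih.2.1 a f' htr
      exact ⟨g, hg, hge.symm⟩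
  | trans h₁ h₂ ih₁ ih₂ =>
    refine ⟨fun a => (ih₁.1 a).trans (ih₂.1 a), ?_, ?_⟩
    · intro a e' htr
      obtain ⟨g, hg, hge⟩ := ih₁.2.1 a e' htr
      obtain ⟨g', hg', hge'⟩ := ih₂.2.1 a g hg
      exact ⟨g', hg', hge.trans hge'⟩
    · intro a f' htr
      obtain ⟨g, hg, hge⟩ := ih₂.2.2 a f' htr
      obtain ⟨g', hg', hge'⟩ := ih₁.2.2 a g hg
      exact ⟨g', hg', hge'.trans hge⟩
  | addCongr h₁ h₂ ih₁ ih₂ =>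
    refine ⟨fun a => by rw [sout_add, sout_add, ih₁.1 a, ih₂.1 a], ?_, ?_⟩
    · intro a e' htr
      cases htr with
      | addL ht =>
        obtain ⟨g, hg, hge⟩ := ih₁.2.1 a e' ht
        exact ⟨g, STr.addL hg, hge⟩
      | addR ht =>
        obtain ⟨g, hg, hge⟩ := ih₂.2.1 a e' ht
        exact ⟨g, STr.addR hg, hge⟩
    · intro a f' htr
      cases htr with
      | addL ht =>
        obtain ⟨g, hg, hge⟩ := ih₁.2.2 a f' ht
        exact ⟨g, STr.addL hg, hge⟩
      | addR ht =>
        obtain ⟨g, hg, hge⟩ := ih₂.2.2 a f' ht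
        exact ⟨g, STr.addR hg, hge⟩
  | @seqCongr e₁ f₁ e₂ f₂ h₁ h₂ ih₁ ih₂ =>
    refine ⟨fun a => by simp [sout_seq], ?_, ?_⟩
    · intro a e' htr
      cases htr with
      | seqO ho => exact ⟨f₂, STr.seqO ((ih₁.1 _).mp ho), h₂⟩
      | seqT ht =>
        obtain ⟨g, hg, hge⟩ := ih₁.2.1 _ _ ht
        exact ⟨.seq g f₂, STr.seqT hg, Eqv.seqCongr hge h₂⟩
    · intro a f' htr
      cases htr with
      | seqO ho => exact ⟨e₂, STr.seqO ((ih₁.1 _).mpr ho), h₂⟩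
      | seqT ht =>
        obtain ⟨g, hg, hge⟩ := ih₁.2.2 _ _ ht
        exact ⟨.seq g e₂, STr.seqT hg, Eqv.seqCongr hge h₂⟩
  | @starCongr e₁ f₁ e₂ f₂ h₁ h₂ ih₁ ih₂ =>
    refine ⟨fun a => by rw [sout_star, sout_star, ih₂.1 a], ?_, ?_⟩
    · intro a e' htr
      cases htr with
      | starR ht =>
        obtain ⟨g, hg, hge⟩ := ih₂.2.1 _ _ ht
        exact ⟨g, STr.starR hg, hge⟩
      | starL ht =>
        obtain ⟨g, hg, hge⟩ := ih₁.2.1 _ _ ht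
        exact ⟨.seq g (.star f₁ f₂), STr.starL hg,
          Eqv.seqCongr hge (Eqv.starCongr h₁ h₂)⟩
      | starO ho =>
        exact ⟨.star f₁ f₂, STr.starO ((ih₁.1 _).mp ho), Eqv.starCongr h₁ h₂⟩
    · intro a f' htr
      cases htr with
      | starR ht =>
        obtain ⟨g, hg, hge⟩ := ih₂.2.2 _ _ ht
        exact ⟨g, STr.starR hg, hge⟩
      | starL ht =>
        obtain ⟨g, hg, hge⟩ := ih₁.2.2 _ _ ht
        exact ⟨.seq g (.star e₁ e₂), STr.starL hg,
          Eqv.seqCongr hge (Eqv.starCongr h₁ h₂)⟩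
      | starO ho =>
        exact ⟨.star e₁ e₂, STr.starO ((ih₁.1 _).mpr ho), Eqv.starCongr h₁ h₂⟩
  | B1 e₁ e₂ =>
    refine ⟨fun a => by rw [sout_add, sout_add, or_comm], ?_, ?_⟩
    · intro a e' htr
      cases htr with
      | addL ht => exact ⟨e', STr.addR ht, Eqv.refl _⟩
      | addR ht => exact ⟨e', STr.addL ht, Eqv.refl _⟩
    · intro a f' htr
      cases htr with
      | addL ht => exact ⟨f', STr.addR ht, Eqv.refl _⟩
      | addR ht => exact ⟨f', STr.addL ht, Eqv.refl _⟩
  | B2 e₁ e₂ e₃ =>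
    refine ⟨fun a => by rw [sout_add, sout_add, sout_add, sout_add, or_assoc], ?_, ?_⟩
    · intro a e' htr
      cases htr with
      | addL ht => exact ⟨e', STr.addL (STr.addL ht), Eqv.refl _⟩
      | addR ht =>
        cases ht with
        | addL ht => exact ⟨e', STr.addL (STr.addR ht), Eqv.refl _⟩
        | addR ht => exact ⟨e', STr.addR ht, Eqv.refl _⟩
    · intro a f' htr
      cases htr with
      | addL ht =>
        cases ht with
        | addL ht => exact ⟨f', STr.addL ht, Eqv.refl _⟩
        | addR ht => exact ⟨f', STr.addR (STr.addL ht), Eqv.refl _⟩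
      | addR ht => exact ⟨f', STr.addR (STr.addR ht), Eqv.refl _⟩
  | B3 e₁ =>
    refine ⟨fun a => by rw [sout_add, or_self], ?_, ?_⟩
    · intro a e' htr
      cases htr with
      | addL ht => exact ⟨e', ht, Eqv.refl _⟩
      | addR ht => exact ⟨e', ht, Eqv.refl _⟩
    · intro a f' htr
      exact ⟨f', STr.addL htr, Eqv.refl _⟩
  | B4 e₁ e₂ e₃ =>
    refine ⟨fun a => by simp [sout_seq, sout_add], ?_, ?_⟩
    · intro a e' htr
      cases htr with
      | seqO ho =>
        cases ho with
        | addL h => exact ⟨e₃, STr.addL (STr.seqO h), Eqv.refl _⟩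
        | addR h => exact ⟨e₃, STr.addR (STr.seqO h), Eqv.refl _⟩
      | seqT ht =>
        cases ht with
        | addL h => exact ⟨_, STr.addL (STr.seqT h), Eqv.refl _⟩
        | addR h => exact ⟨_, STr.addR (STr.seqT h), Eqv.refl _⟩
    · intro a f' htr
      cases htr with
      | addL ht =>
        cases ht with
        | seqO ho => exact ⟨e₃, STr.seqO (SOut.addL ho), Eqv.refl _⟩
        | seqT h => exact ⟨_, STr.seqT (STr.addL h), Eqv.refl _⟩
      | addR ht =>
        cases ht with
        | seqO ho => exact ⟨e₃, STr.seqO (SOut.addR ho), Eqv.refl _⟩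
        | seqT h => exact ⟨_, STr.seqT (STr.addR h), Eqv.refl _⟩
  | B5 e₁ e₂ e₃ =>
    refine ⟨fun a => by simp [sout_seq], ?_, ?_⟩
    · intro a e' htr
      cases htr with
      | seqO ho => exact ⟨.seq e₂ e₃, STr.seqT (STr.seqO ho), Eqv.refl _⟩
      | seqT ht => exact ⟨_, STr.seqT (STr.seqT ht), Eqv.B5 _ _ _⟩
    · intro a f' htr
      cases htr with
      | seqO ho => exact absurd ho sout_seq
      | seqT ht =>
        cases ht with
        | seqO ho => exact ⟨.seq e₂ e₃, STr.seqO ho, Eqv.refl _⟩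
        | seqT h => exact ⟨_, STr.seqT h, Eqv.B5 _ _ _⟩
  | B6 e₁ =>
    refine ⟨fun a => by simp [sout_add, sout_zero], ?_, ?_⟩
    · intro a e' htr
      cases htr with
      | addL ht => exact ⟨e', ht, Eqv.refl _⟩
      | addR ht => exact absurd ht (by intro h; cases h)
    · intro a f' htr
      exact ⟨f', STr.addL htr, Eqv.refl _⟩
  | B7 e₁ =>
    refine ⟨fun a => by simp [sout_seq, sout_zero], ?_, ?_⟩
    · intro a e' htr
      cases htr with
      | seqO ho => exact absurd ho sout_zero
      | seqT ht => exact absurd ht (by intro h; cases h)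
    · intro a f' htr
      cases htr
  | BKS1 e₁ e₂ =>
    refine ⟨fun a => by simp [sout_star, sout_add, sout_seq], ?_, ?_⟩
    · intro a e' htr
      cases htr with
      | starR ht => exact ⟨e', STr.addR ht, Eqv.refl _⟩
      | starL ht => exact ⟨_, STr.addL (STr.seqT ht), Eqv.refl _⟩
      | starO ho => exact ⟨_, STr.addL (STr.seqO ho), Eqv.refl _⟩
    · intro a f' htr
      cases htr with
      | addL ht =>
        cases ht with
        | seqO ho => exact ⟨_, STr.starO ho, Eqv.refl _⟩
        | seqT h => exact ⟨_, STr.starL h, Eqv.refl _⟩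
      | addR ht => exact ⟨f', STr.starR ht, Eqv.refl _⟩
  | BKS2 e₁ e₂ e₃ =>
    refine ⟨fun a => by simp [sout_star, sout_seq], ?_, ?_⟩
    · intro a e' htr
      cases htr with
      | seqO ho =>
        cases ho with
        | star h => exact ⟨e₃, STr.starR (STr.seqO h), Eqv.refl _⟩
      | seqT ht =>
        cases ht with
        | starR h => exact ⟨_, STr.starR (STr.seqT h), Eqv.refl _⟩
        | starL h =>
          exact ⟨_, STr.starL h,
            Eqv.trans (Eqv.symm (Eqv.B5 _ _ _))
              (Eqv.seqCongr (Eqv.refl _) (Eqv.BKS2 _ _ _))⟩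
        | starO ho => exact ⟨_, STr.starO ho, Eqv.BKS2 _ _ _⟩
    · intro a f' htr
      cases htr with
      | starR ht =>
        cases ht with
        | seqO ho => exact ⟨e₃, STr.seqO (SOut.star ho), Eqv.refl _⟩
        | seqT h => exact ⟨_, STr.seqT (STr.starR h), Eqv.refl _⟩
      | starL ht =>
        exact ⟨_, STr.seqT (STr.starL ht),
          Eqv.trans (Eqv.symm (Eqv.B5 _ _ _))
            (Eqv.seqCongr (Eqv.refl _) (Eqv.BKS2 _ _ _))⟩
      | starO ho => exact ⟨_, STr.seqT (STr.starO ho), Eqv.BKS2 _ _ _⟩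
  | @RSP e₁ e₂ e₃ h ih =>
    refine ⟨?_, ?_, ?_⟩
    · intro a
      rw [sout_star, ih.1 a, sout_add]
      simp [sout_seq]
    · intro a e' htr
      obtain ⟨g, hg, hge⟩ := ih.2.1 a e' htr
      cases hg with
      | addL ht =>
        cases ht with
        | seqO ho => exact ⟨_, STr.starO ho, hge.trans (Eqv.RSP h)⟩
        | seqT ht' =>
          exact ⟨_, STr.starL ht',
            hge.trans (Eqv.seqCongr (Eqv.refl _) (Eqv.RSP h))⟩
      | addR ht => exact ⟨g, STr.starR ht, hge⟩
    · intro a f' htr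
      cases htr with
      | starR ht =>
        obtain ⟨g, hg, hge⟩ := ih.2.2 a f' (STr.addR ht)
        exact ⟨g, hg, hge⟩
      | starL ht =>
        obtain ⟨g, hg, hge⟩ := ih.2.2 a _ (STr.addL (STr.seqT ht))
        exact ⟨g, hg, hge.trans (Eqv.seqCongr (Eqv.refl _) (Eqv.RSP h))⟩
      | starO ho =>
        obtain ⟨g, hg, hge⟩ := ih.2.2 a e₃ (STr.addL (STr.seqO ho))
        exact ⟨g, hg, hge.trans (Eqv.RSP h)⟩

end Aux

/-- Provable equivalence `≡` is a bisimulation equivalence on the prechart of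
1-free star expressions: it is an equivalence relation, and whenever `e ≡ f`,
`e` and `f` have the same outputs and matching transitions into `≡`-related
expressions, and symmetrically. -/
theorem stmt3 {A : Type} :
    Equivalence (@Eqv A) ∧
    ∀ e f : SExp A, Eqv e f →
      (∀ a, SOut e a ↔ SOut f a) ∧
      (∀ a e', STr e a e' → ∃ f', STr f a f' ∧ Eqv e' f') ∧
      (∀ a f', STr f a f' → ∃ e', STr e a e' ∧ Eqv e' f') :=
  ⟨⟨Eqv.refl, Eqv.symm, Eqv.trans⟩, fun _ _ h => eqv_bis h⟩
end

section
/- For every 1-free star expression e, e ≡ Σ_{e ⇒ a} a + Σ_{e →a f} a·f, where the sums range over the outputs and outgoing transitions of e in the operational semantics (these sets are finite), and the empty sum is 0. -/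
namespace SExp

variable {A : Type}

local infix:50 " ≡ " => Eqv

instance : Trans (@Eqv A) (@Eqv A) (@Eqv A) := ⟨Eqv.trans⟩

lemma eqv_zero_add (e : SExp A) : add zero e ≡ e :=
  (Eqv.B1 _ _).trans (Eqv.B6 _)

lemma eqv_add_left_comm (e f g : SExp A) : add e (add f g) ≡ add f (add e g) :=
  calc add e (add f g) ≡ add (add e f) g := Eqv.B2 _ _ _
    _ ≡ add (add f e) g := Eqv.addCongr (Eqv.B1 _ _) (Eqv.refl _)
    _ ≡ add f (add e g) := (Eqv.B2 _ _ _).symm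

lemma sumList_append (l₁ l₂ : List (SExp A)) :
    sumList (l₁ ++ l₂) ≡ add (sumList l₁) (sumList l₂) := by
  induction l₁ with
  | nil => exact (eqv_zero_add _).symm
  | cons x l ih => exact (Eqv.addCongr (Eqv.refl x) ih).trans (Eqv.B2 _ _ _)

lemma sumList_map_congr {α : Type} {l : List α} {g h : α → SExp A}
    (H : ∀ x ∈ l, g x ≡ h x) : sumList (l.map g) ≡ sumList (l.map h) := by
  induction l with
  | nil => exact Eqv.refl _
  | cons x l ih =>
    exact Eqv.addCongr (H x List.mem_cons_self) (ih fun y hy => H y (List.mem_cons_of_mem _ hy))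

lemma seq_sumList (l : List (SExp A)) (c : SExp A) :
    seq (sumList l) c ≡ sumList (l.map (seq · c)) := by
  induction l with
  | nil => exact Eqv.B7 c
  | cons x l ih => exact (Eqv.B4 _ _ _).trans (Eqv.addCongr (Eqv.refl _) ih)

lemma add_sumList_of_mem {x : SExp A} {l : List (SExp A)} (hx : x ∈ l) :
    add x (sumList l) ≡ sumList l := by
  induction l with
  | nil => cases hx
  | cons y l ih =>
    rcases List.mem_cons.1 hx with rfl | hx
    · exact (Eqv.B2 _ _ _).trans (Eqv.addCongr (Eqv.B3 _) (Eqv.refl _))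
    · exact (eqv_add_left_comm _ _ _).trans (Eqv.addCongr (Eqv.refl y) (ih hx))

lemma add_sumList_of_subset {l' l : List (SExp A)} (h : l' ⊆ l) :
    add (sumList l') (sumList l) ≡ sumList l := by
  induction l' with
  | nil => exact eqv_zero_add _
  | cons x l' ih =>
    obtain ⟨hx, hl'⟩ := List.cons_subset.1 h
    calc add (add x (sumList l')) (sumList l) ≡ add x (add (sumList l') (sumList l)) :=
          (Eqv.B2 _ _ _).symm
      _ ≡ add x (sumList l) := Eqv.addCongr (Eqv.refl x) (ih hl')
      _ ≡ sumList l := add_sumList_of_mem hx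

lemma sumList_congr_of_mem_iff {l l' : List (SExp A)} (h : ∀ x, x ∈ l ↔ x ∈ l') :
    sumList l ≡ sumList l' :=
  calc sumList l ≡ add (sumList l') (sumList l) :=
        (add_sumList_of_subset fun x hx => (h x).2 hx).symm
    _ ≡ add (sumList l) (sumList l') := Eqv.B1 _ _
    _ ≡ sumList l' := add_sumList_of_subset fun x hx => (h x).1 hx

/-- The sum `Σ_{a ∈ outs} a + Σ_{(a, f) ∈ trs} a·f`. -/
def expansion (outs : List A) (trs : List (A × SExp A)) : SExp A :=
  sumList (outs.map act ++ trs.map fun p => seq (act p.1) p.2)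

lemma expansion_append (o₁ o₂ : List A) (t₁ t₂ : List (A × SExp A)) :
    expansion (o₁ ++ o₂) (t₁ ++ t₂) ≡ add (expansion o₁ t₁) (expansion o₂ t₂) := by
  refine (sumList_congr_of_mem_iff fun x => ?_).trans (sumList_append _ _)
  simp only [List.map_append, List.mem_append]
  tauto

lemma seq_expansion (outs : List A) (trs : List (A × SExp A)) (c : SExp A) :
    seq (expansion outs trs) c ≡
      expansion [] (outs.map (·, c) ++ trs.map fun p => (p.1, seq p.2 c)) := by
  refine (seq_sumList _ c).trans ?_
  simp only [expansion, List.map_append, List.map_map, List.map_nil, List.nil_append,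
    Function.comp_def]
  refine (sumList_append _ _).trans ((Eqv.addCongr (Eqv.refl _) ?_).trans
    (sumList_append _ _).symm)
  exact sumList_map_congr fun p _ => (Eqv.B5 _ _ _).symm

lemma expansion_congr_of_mem_iff {o o' : List A} {t t' : List (A × SExp A)}
    (ho : ∀ a, a ∈ o ↔ a ∈ o') (ht : ∀ p, p ∈ t ↔ p ∈ t') :
    expansion o t ≡ expansion o' t' := by
  refine sumList_congr_of_mem_iff fun x => ?_
  simp only [List.mem_append, List.mem_map, ho, ht]

def outputs : SExp A → List A
  | act a => [a]
  | zero => []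
  | add e₁ e₂ => outputs e₁ ++ outputs e₂
  | seq _ _ => []
  | star _ e₂ => outputs e₂

def transitions : SExp A → List (A × SExp A)
  | act _ => []
  | zero => []
  | add e₁ e₂ => transitions e₁ ++ transitions e₂
  | seq e₁ e₂ => (outputs e₁).map (·, e₂) ++ (transitions e₁).map fun p => (p.1, seq p.2 e₂)
  | star e₁ e₂ =>
    ((outputs e₁).map (·, star e₁ e₂) ++
      (transitions e₁).map fun p => (p.1, seq p.2 (star e₁ e₂))) ++ transitions e₂

lemma mem_outputs_iff (e : SExp A) (a : A) : a ∈ outputs e ↔ SOut e a := by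
  induction e with
  | act b =>
    simp only [outputs, List.mem_singleton]
    exact ⟨fun h => h ▸ SOut.act b, fun h => by cases h; rfl⟩
  | zero => simp only [outputs, List.not_mem_nil, false_iff]; rintro ⟨⟩
  | add e₁ e₂ ih₁ ih₂ =>
    simp only [outputs, List.mem_append, ih₁, ih₂]
    exact ⟨fun h => h.elim SOut.addL SOut.addR, fun h => by cases h <;> simp_all⟩
  | seq => simp only [outputs, List.not_mem_nil, false_iff]; rintro ⟨⟩
  | star e₁ e₂ _ ih₂ =>
    simp only [outputs, ih₂]
    exact ⟨SOut.star, fun h => by cases h; assumption⟩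

lemma mem_transitions_iff (e : SExp A) (a : A) (f : SExp A) :
    (a, f) ∈ transitions e ↔ STr e a f := by
  induction e generalizing a f with
  | act | zero => simp only [transitions, List.not_mem_nil, false_iff]; rintro ⟨⟩
  | add e₁ e₂ ih₁ ih₂ =>
    simp only [transitions, List.mem_append, ih₁, ih₂]
    exact ⟨fun h => h.elim STr.addL STr.addR, fun h => by cases h <;> simp_all⟩
  | seq e₁ e₂ ih₁ _ =>
    simp only [transitions, List.mem_append, List.mem_map, Prod.exists, Prod.mk.injEq,
      mem_outputs_iff, ih₁]
    constructor
    · rintro (⟨b, hb, rfl, rfl⟩ | ⟨b, g, hg, rfl, rfl⟩)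
      exacts [STr.seqO hb, STr.seqT hg]
    · intro h
      cases h with
      | seqO h => exact Or.inl ⟨_, h, rfl, rfl⟩
      | seqT h => exact Or.inr ⟨_, _, h, rfl, rfl⟩
  | star e₁ e₂ ih₁ ih₂ =>
    simp only [transitions, List.mem_append, List.mem_map, Prod.exists, Prod.mk.injEq,
      mem_outputs_iff, ih₁, ih₂]
    constructor
    · rintro ((⟨b, hb, rfl, rfl⟩ | ⟨b, g, hg, rfl, rfl⟩) | h)
      exacts [STr.starO hb, STr.starL hg, STr.starR h]
    · intro h
      cases h with
      | starR h => exact Or.inr h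
      | starL h => exact Or.inl (Or.inr ⟨_, _, h, rfl, rfl⟩)
      | starO h => exact Or.inl (Or.inl ⟨_, h, rfl, rfl⟩)

theorem eqv_expansion (e : SExp A) : e ≡ expansion (outputs e) (transitions e) := by
  induction e with
  | act a => exact (Eqv.B6 _).symm
  | zero => exact Eqv.refl _
  | add e₁ e₂ ih₁ ih₂ => exact (Eqv.addCongr ih₁ ih₂).trans (expansion_append _ _ _ _).symm
  | seq e₁ e₂ ih₁ _ => exact (Eqv.seqCongr ih₁ (Eqv.refl e₂)).trans (seq_expansion _ _ _)
  | star e₁ e₂ ih₁ ih₂ =>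
    calc star e₁ e₂ ≡ add (seq e₁ (star e₁ e₂)) e₂ := Eqv.BKS1 _ _
      _ ≡ add (seq (expansion (outputs e₁) (transitions e₁)) (star e₁ e₂))
            (expansion (outputs e₂) (transitions e₂)) :=
          Eqv.addCongr (Eqv.seqCongr ih₁ (Eqv.refl _)) ih₂
      _ ≡ _ := (Eqv.addCongr (seq_expansion _ _ _) (Eqv.refl _)).trans
          (expansion_append [] _ _ _).symm

end SExp

/-- Fundamental theorem: every 1-free star expression is provably equal to the
sum of its outputs and outgoing transitions, `e ≡ Σ_{e ⇒ a} a + Σ_{e →a f} a·f`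
(the sets of outputs and transitions are finite; the empty sum is `0`). -/
theorem stmt4 {A : Type} (e : SExp A) :
    ∃ (outs : List A) (trs : List (A × SExp A)),
      outs.Nodup ∧ trs.Nodup ∧
      (∀ a, SOut e a ↔ a ∈ outs) ∧
      (∀ a f, STr e a f ↔ (a, f) ∈ trs) ∧
      Eqv e (sumList (outs.map SExp.act ++
        trs.map (fun p => SExp.seq (SExp.act p.1) p.2))) := by
  classical
  refine ⟨e.outputs.dedup, e.transitions.dedup, List.nodup_dedup _, List.nodup_dedup _,
    fun a => ?_, fun a f => ?_, ?_⟩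
  · rw [List.mem_dedup, SExp.mem_outputs_iff]
  · rw [List.mem_dedup, SExp.mem_transitions_iff]
  · exact (SExp.eqv_expansion e).trans
      (SExp.expansion_congr_of_mem_iff (fun a => List.mem_dedup.symm) fun p => List.mem_dedup.symm)
end

section
/- For any finite prechart X, a map s : X → SExp is a solution of the linear system associated to X (i.e. s(x) ≡ Σ_{x ⇒ a} a + Σ_{x →a x'} a·s(x') for all x ∈ X) if and only if the composite [−]_≡ ∘ s : X → SExp/≡ is a P-coalgebra homomorphism. -/
universe u

/-- A prechart: a coalgebra for the functor `P(X) = 2^A × Pfin(X)^A`. -/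
structure Prechart (A : Type) (X : Type u) where
  out : X → A → Prop
  tr : X → A → Set X
  fin : ∀ x a, (tr x a).Finite

namespace Prechart

variable {A : Type} {X Y : Type u}

/-- `h` is a `P`-coalgebra homomorphism from `c` to `d`. -/
def IsHom (c : Prechart A X) (d : Prechart A Y) (h : X → Y) : Prop :=
  (∀ x a, c.out x a ↔ d.out (h x) a) ∧ ∀ x a, d.tr (h x) a = h '' c.tr x a

/-- `R` is a bisimulation between precharts `c` and `d`: it carries a prechart
structure making both projections coalgebra homomorphisms. -/
def IsBisim (c : Prechart A X) (d : Prechart A Y) (R : X → Y → Prop) : Prop :=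
  ∃ e : Prechart A {p : X × Y // R p.1 p.2},
    IsHom e c (fun p => p.1.1) ∧ IsHom e d (fun p => p.1.2)

end Prechart

/-- The setoid of 1-free star expressions modulo provable equivalence. -/
def eqvSetoid (A : Type) : Setoid (SExp A) :=
  ⟨Eqv, ⟨Eqv.refl, Eqv.symm, Eqv.trans⟩⟩

/-!
Every expression is provably equal to its one-step expansion `Σ_{e ⇒ a} a + Σ_{e →a e'} a · e'`
(the fundamental theorem; induction on `e`, using (BKS1) for stars). With the ACI laws of `+`
this shows that two expressions with the same outputs and, modulo `≡`, the same derivatives are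
provably equal. As `[−]_≡` is a homomorphism, the outputs and the `≡`-classes of derivatives of
`s x` are read off from `[s x]`. So `[−]_≡ ∘ s` is a homomorphism iff each `s x` has the
one-step behaviour of the right-hand side of its equation, which by soundness of `≡` in one
direction and the above in the other means `s x ≡ Σ a + Σ a · s x'`.
-/

theorem Set.Finite.exists_nodup_list {α : Type*} {s : Set α} (hs : s.Finite) :
    ∃ l : List α, l.Nodup ∧ ∀ a, a ∈ s ↔ a ∈ l :=
  ⟨hs.toFinset.toList, hs.toFinset.nodup_toList, by simp⟩

theorem Prechart.finite_setOf_mem_tr {A : Type} {X : Type u} (d : Prechart A X) (x : X)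
    (h : {a | (d.tr x a).Nonempty}.Finite) : {p : A × X | p.2 ∈ d.tr x p.1}.Finite := by
  refine (h.biUnion fun a _ => (d.fin x a).image (Prod.mk a)).subset ?_
  rintro ⟨a, y⟩ hy
  exact Set.mem_biUnion ⟨y, hy⟩ ⟨y, hy, rfl⟩

namespace Eqv

variable {A : Type}

theorem zero_add (e : SExp A) : Eqv (.add .zero e) e :=
  (B1 _ _).trans (B6 e)

theorem add_left_comm (e f g : SExp A) : Eqv (.add e (.add f g)) (.add f (.add e g)) :=
  (B2 _ _ _).trans <| (addCongr (B1 e f) (refl g)).trans (B2 _ _ _).symm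

theorem sumList_append (l m : List (SExp A)) :
    Eqv (sumList (l ++ m)) (.add (sumList l) (sumList m)) := by
  induction l with
  | nil => exact (zero_add _).symm
  | cons e l ih => exact (addCongr (refl e) ih).trans (B2 _ _ _)

theorem seq_sumList (l : List (SExp A)) (g : SExp A) :
    Eqv (.seq (sumList l) g) (sumList (l.map (.seq · g))) := by
  induction l with
  | nil => exact B7 g
  | cons e l ih => exact (B4 _ _ _).trans (addCongr (refl _) ih)

theorem add_sumList_of_mem {m : List (SExp A)} {e f : SExp A} (hf : f ∈ m) (hef : Eqv e f) :
    Eqv (.add e (sumList m)) (sumList m) := by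
  induction m with
  | nil => cases hf
  | cons g m ih =>
    rcases List.mem_cons.mp hf with rfl | hf
    · exact (B2 _ _ _).trans (addCongr ((addCongr hef (refl _)).trans (B3 _)) (refl _))
    · exact (add_left_comm _ _ _).trans (addCongr (refl g) (ih hf))

theorem add_sumList_of_forall_exists {l m : List (SExp A)} (h : ∀ e ∈ l, ∃ f ∈ m, Eqv e f) :
    Eqv (.add (sumList l) (sumList m)) (sumList m) := by
  induction l with
  | nil => exact zero_add _
  | cons e l ih =>
    obtain ⟨f, hf, hef⟩ := h e List.mem_cons_self
    exact (B2 _ _ _).symm.trans <|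
      (addCongr (refl e) (ih fun g hg => h g (List.mem_cons_of_mem e hg))).trans
        (add_sumList_of_mem hf hef)

theorem sumList_of_forall_exists {l m : List (SExp A)} (hlm : ∀ e ∈ l, ∃ f ∈ m, Eqv e f)
    (hml : ∀ f ∈ m, ∃ e ∈ l, Eqv f e) : Eqv (sumList l) (sumList m) :=
  (add_sumList_of_forall_exists hml).symm.trans <| (B1 _ _).trans (add_sumList_of_forall_exists hlm)

theorem sumList_of_subset {l m : List (SExp A)} (hlm : l ⊆ m) (hml : m ⊆ l) :
    Eqv (sumList l) (sumList m) :=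
  sumList_of_forall_exists (fun e he => ⟨e, hlm he, refl e⟩) (fun e he => ⟨e, hml he, refl e⟩)

end Eqv

namespace SExp

variable {A : Type}

def outs : SExp A → List A
  | act a => [a]
  | zero => []
  | add e f => e.outs ++ f.outs
  | seq _ _ => []
  | star _ f => f.outs

/-- The transitions of `e · g`, where `o` and `t` list the outputs and transitions of `e`. -/
def seqSteps (o : List A) (t : List (A × SExp A)) (g : SExp A) : List (A × SExp A) :=
  o.map (·, g) ++ t.map fun p => (p.1, seq p.2 g)

def steps : SExp A → List (A × SExp A)
  | act _ => []
  | zero => []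
  | add e f => e.steps ++ f.steps
  | seq e f => seqSteps e.outs e.steps f
  -- `e * f` steps like `e · (e * f) + f`, cf. (BKS1)
  | star e f => seqSteps e.outs e.steps (star e f) ++ f.steps

theorem sOut_iff_mem_outs {e : SExp A} {a : A} : SOut e a ↔ a ∈ e.outs := by
  constructor
  · intro h
    induction h <;> simp_all [outs]
  · induction e with
    | act => simp only [outs, List.mem_singleton]; rintro rfl; exact .act _
    | zero => simp [outs]
    | add e f ihe ihf =>
      simp only [outs, List.mem_append]
      rintro (h | h)
      exacts [.addL (ihe h), .addR (ihf h)]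
    | seq => simp [outs]
    | star e f _ ihf => exact fun h => .star (ihf h)

theorem mem_seqSteps {o : List A} {t : List (A × SExp A)} {g f : SExp A} {a : A} :
    (a, f) ∈ seqSteps o t g ↔ a ∈ o ∧ f = g ∨ ∃ f', (a, f') ∈ t ∧ f = seq f' g := by
  simp [seqSteps, eq_comm]

theorem sTr_iff_mem_steps {e f : SExp A} {a : A} : STr e a f ↔ (a, f) ∈ e.steps := by
  constructor
  · intro h
    induction h <;> simp_all [steps, mem_seqSteps, sOut_iff_mem_outs]
  · induction e generalizing f with
    | act => simp [steps]
    | zero => simp [steps]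
    | add e f ihe ihf =>
      simp only [steps, List.mem_append]
      rintro (h | h)
      exacts [.addL (ihe h), .addR (ihf h)]
    | seq e₁ e₂ ih₁ =>
      simp only [steps, mem_seqSteps]
      rintro (⟨h, rfl⟩ | ⟨f', h, rfl⟩)
      exacts [.seqO (sOut_iff_mem_outs.2 h), .seqT (ih₁ h)]
    | star e₁ e₂ ih₁ ih₂ =>
      simp only [steps, List.mem_append, mem_seqSteps]
      rintro ((⟨h, rfl⟩ | ⟨f', h, rfl⟩) | h)
      exacts [.starO (sOut_iff_mem_outs.2 h), .starL (ih₁ h), .starR (ih₂ h)]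

theorem sOut_sumList {l : List (SExp A)} {a : A} : SOut (sumList l) a ↔ ∃ e ∈ l, SOut e a := by
  induction l with
  | nil => simp only [sumList, List.foldr_nil, List.not_mem_nil, false_and, exists_false,
      iff_false]; nofun
  | cons e l ih =>
    refine ⟨fun h => ?_, ?_⟩
    · cases h with
      | addL h => exact ⟨e, List.mem_cons_self, h⟩
      | addR h => obtain ⟨f, hf, h⟩ := ih.mp h; exact ⟨f, List.mem_cons_of_mem e hf, h⟩
    · rintro ⟨f, hf, h⟩
      rcases List.mem_cons.mp hf with rfl | hf
      exacts [.addL h, .addR (ih.mpr ⟨f, hf, h⟩)]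

theorem sTr_sumList {l : List (SExp A)} {a : A} {g : SExp A} :
    STr (sumList l) a g ↔ ∃ e ∈ l, STr e a g := by
  induction l with
  | nil => simp only [sumList, List.foldr_nil, List.not_mem_nil, false_and, exists_false,
      iff_false]; nofun
  | cons e l ih =>
    refine ⟨fun h => ?_, ?_⟩
    · cases h with
      | addL h => exact ⟨e, List.mem_cons_self, h⟩
      | addR h => obtain ⟨f, hf, h⟩ := ih.mp h; exact ⟨f, List.mem_cons_of_mem e hf, h⟩
    · rintro ⟨f, hf, h⟩
      rcases List.mem_cons.mp hf with rfl | hf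
      exacts [.addL h, .addR (ih.mpr ⟨f, hf, h⟩)]

def summands {α : Type*} (o : List A) (t : List (A × α)) (s : α → SExp A) : List (SExp A) :=
  o.map act ++ t.map fun p => seq (act p.1) (s p.2)

def expand {α : Type*} (o : List A) (t : List (A × α)) (s : α → SExp A) : SExp A :=
  sumList (summands o t s)

theorem sOut_expand {α : Type*} {o : List A} {t : List (A × α)} {s : α → SExp A} {a : A} :
    SOut (expand o t s) a ↔ a ∈ o := by
  simp only [expand, summands, sOut_sumList, List.mem_append, List.mem_map]
  constructor
  · rintro ⟨_, ⟨b, hb, rfl⟩ | ⟨p, -, rfl⟩, h⟩ <;> cases h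
    exact hb
  · exact fun ha => ⟨act a, .inl ⟨a, ha, rfl⟩, .act a⟩

theorem sTr_expand {α : Type*} {o : List A} {t : List (A × α)} {s : α → SExp A} {a : A} :
    {g | STr (expand o t s) a g} = s '' {x | (a, x) ∈ t} := by
  ext g
  simp only [expand, summands, Set.mem_ofPred_eq, sTr_sumList, List.mem_append, List.mem_map, Set.mem_image]
  constructor
  · rintro ⟨_, ⟨b, -, rfl⟩ | ⟨p, hp, rfl⟩, h⟩
    · cases h
    · cases h with
      | seqO h => cases h; exact ⟨p.2, hp, rfl⟩
      | seqT h => cases h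
  · rintro ⟨x, hx, rfl⟩
    exact ⟨_, .inr ⟨(a, x), hx, rfl⟩, .seqO (.act a)⟩

theorem expand_append_eqv (o o' : List A) (t t' : List (A × SExp A)) :
    Eqv (.add (expand o t id) (expand o' t' id)) (expand (o ++ o') (t ++ t') id) :=
  (Eqv.sumList_append _ _).symm.trans <| Eqv.sumList_of_subset
    (by intro e; simp only [summands, List.mem_append, List.map_append]; tauto)
    (by intro e; simp only [summands, List.mem_append, List.map_append]; tauto)

theorem seq_expand_eqv (o : List A) (t : List (A × SExp A)) (g : SExp A) :
    Eqv (.seq (expand o t id) g) (expand [] (seqSteps o t g) id) := by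
  refine (Eqv.seq_sumList _ _).trans (Eqv.sumList_of_forall_exists ?_ ?_)
  all_goals
    simp only [summands, seqSteps, List.map_append, List.map_map, List.mem_map, List.mem_append,
      List.map_nil, List.nil_append, Function.comp_def, id]
    rintro _ (⟨b, hb, rfl⟩ | ⟨p, hp, rfl⟩)
  · exact ⟨_, .inl ⟨b, hb, rfl⟩, .refl _⟩
  · exact ⟨_, .inr ⟨p, hp, rfl⟩, (Eqv.B5 _ _ _).symm⟩
  · exact ⟨_, .inl ⟨b, hb, rfl⟩, .refl _⟩
  · exact ⟨_, .inr ⟨p, hp, rfl⟩, Eqv.B5 _ _ _⟩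

theorem eqv_expand (e : SExp A) : Eqv e (expand e.outs e.steps id) := by
  induction e with
  | act a => exact (Eqv.B6 _).symm
  | zero => exact .refl _
  | add e f ihe ihf => exact (Eqv.addCongr ihe ihf).trans (expand_append_eqv _ _ _ _)
  | seq e f ihe => exact (Eqv.seqCongr ihe (.refl f)).trans (seq_expand_eqv _ _ _)
  | star e f ihe ihf =>
    exact (Eqv.BKS1 e f).trans <| (Eqv.addCongr
      ((Eqv.seqCongr ihe (.refl _)).trans (seq_expand_eqv _ _ _)) ihf).trans
        (expand_append_eqv _ _ _ _)

theorem exists_eqv_mem_summands {e f : SExp A} (ho : ∀ a, SOut e a → SOut f a)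
    (ht : ∀ a, Quotient.mk (eqvSetoid A) '' {g | STr e a g} ⊆
      Quotient.mk (eqvSetoid A) '' {g | STr f a g}) :
    ∀ u ∈ summands e.outs e.steps id, ∃ v ∈ summands f.outs f.steps id, Eqv u v := by
  simp only [summands, List.mem_append, List.mem_map, id]
  rintro _ (⟨a, ha, rfl⟩ | ⟨⟨a, g⟩, hg, rfl⟩)
  · exact ⟨act a, .inl ⟨a, sOut_iff_mem_outs.1 (ho a (sOut_iff_mem_outs.2 ha)), rfl⟩, .refl _⟩
  · obtain ⟨g', hg', hgg'⟩ := ht a ⟨g, sTr_iff_mem_steps.2 hg, rfl⟩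
    exact ⟨_, .inr ⟨(a, g'), sTr_iff_mem_steps.1 hg', rfl⟩,
      .seqCongr (.refl _) (Quotient.exact hgg'.symm)⟩

theorem eqv_of_step {e f : SExp A} (ho : ∀ a, SOut e a ↔ SOut f a)
    (ht : ∀ a, Quotient.mk (eqvSetoid A) '' {g | STr e a g} =
      Quotient.mk (eqvSetoid A) '' {g | STr f a g}) :
    Eqv e f :=
  (eqv_expand e).trans <| (Eqv.sumList_of_forall_exists
    (exists_eqv_mem_summands (fun a => (ho a).1) fun a => (ht a).le)
    (exists_eqv_mem_summands (fun a => (ho a).2) fun a => (ht a).ge)).trans (eqv_expand f).symm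

theorem exists_nodup_eqv_expand {X : Type u} (d : Prechart A X) (s : X → SExp A) (x : X)
    (hout : ∀ a, d.out x a ↔ SOut (s x) a)
    (htr : ∀ a, Quotient.mk (eqvSetoid A) '' {f | STr (s x) a f} =
      (fun x' => Quotient.mk (eqvSetoid A) (s x')) '' d.tr x a) :
    ∃ (o : List A) (t : List (A × X)), o.Nodup ∧ t.Nodup ∧ (∀ a, d.out x a ↔ a ∈ o) ∧
      (∀ a x', x' ∈ d.tr x a ↔ (a, x') ∈ t) ∧ Eqv (s x) (expand o t s) := by
  obtain ⟨o, ho, hmem_o⟩ := Set.Finite.exists_nodup_list (s := {a | d.out x a})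
    ((s x).outs.finite_toSet.subset fun a h => sOut_iff_mem_outs.1 ((hout a).1 h))
  have hlabels : {a | (d.tr x a).Nonempty} ⊆ {a | a ∈ (s x).steps.map Prod.fst} := by
    rintro a ⟨x', hx'⟩
    obtain ⟨f, hf, -⟩ := (htr a).ge ⟨x', hx', rfl⟩
    exact List.mem_map_of_mem (f := Prod.fst) (sTr_iff_mem_steps.1 hf)
  obtain ⟨t, ht, hmem_t⟩ :=
    (d.finite_setOf_mem_tr x ((List.finite_toSet _).subset hlabels)).exists_nodup_list
  refine ⟨o, t, ho, ht, hmem_o, fun a x' => hmem_t (a, x'), eqv_of_step ?_ fun a => ?_⟩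
  · exact fun a => (hout a).symm.trans ((hmem_o a).trans sOut_expand.symm)
  · rw [htr, sTr_expand, Set.image_image]
    exact congrArg _ (Set.ext fun x' => hmem_t (a, x'))

end SExp

open SExp

theorem stmt5_general {A : Type} {X : Type}
    (c : Prechart A (SExp A))
    (hco : ∀ e a, c.out e a ↔ SOut e a)
    (hct : ∀ e a, c.tr e a = {f | STr e a f})
    (q : Prechart A (Quotient (eqvSetoid A)))
    (hq : Prechart.IsHom c q (Quotient.mk (eqvSetoid A)))
    (d : Prechart A X) (s : X → SExp A) :
    (∀ x : X, ∃ (outs : List A) (trs : List (A × X)),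
       outs.Nodup ∧ trs.Nodup ∧
       (∀ a, d.out x a ↔ a ∈ outs) ∧
       (∀ a x', x' ∈ d.tr x a ↔ (a, x') ∈ trs) ∧
       Eqv (s x) (sumList (outs.map SExp.act ++
         trs.map (fun p => SExp.seq (SExp.act p.1) (s p.2)))))
    ↔ Prechart.IsHom d q (fun x => Quotient.mk (eqvSetoid A) (s x)) := by
  have qout (e : SExp A) (a : A) : q.out ⟦e⟧ a ↔ SOut e a := (hq.1 e a).symm.trans (hco e a)
  have qtr (e : SExp A) (a : A) : q.tr ⟦e⟧ a = Quotient.mk _ '' {f | STr e a f} := by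
    rw [hq.2, hct]
  constructor
  · intro hsol
    refine ⟨fun x a => ?_, fun x a => ?_⟩
    all_goals
      obtain ⟨o, t, -, -, hout, htr, hx⟩ := hsol x
      have hx : (⟦s x⟧ : Quotient (eqvSetoid A)) = ⟦expand o t s⟧ := Quotient.sound hx
      beta_reduce
      rw [hx]
    · rw [qout, sOut_expand, hout]
    · rw [qtr, sTr_expand, Set.image_image]
      exact congrArg _ (Set.ext fun x' => (htr a x').symm)
  · intro hhom x
    exact exists_nodup_eqv_expand d s x (fun a => (hhom.1 x a).trans (qout _ a))
      fun a => by rw [← qtr, hhom.2]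

/-- For a finite prechart `d`, a map `s : X → SExp` is a solution to the linear
system of `d` iff the composite `[−]_≡ ∘ s : X → SExp/≡` is a coalgebra
homomorphism.  Here `c` is the prechart of star expressions (operational
semantics) and `q` the quotient prechart with `[−]_≡` a homomorphism. -/
theorem stmt5 {A : Type} {X : Type}
    (c : Prechart A (SExp A))
    (hco : ∀ e a, c.out e a ↔ SOut e a)
    (hct : ∀ e a, c.tr e a = {f | STr e a f})
    (q : Prechart A (Quotient (eqvSetoid A)))
    (hq : Prechart.IsHom c q (Quotient.mk (eqvSetoid A)))
    [Finite X] (d : Prechart A X) (s : X → SExp A) :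
    (∀ x : X, ∃ (outs : List A) (trs : List (A × X)),
       outs.Nodup ∧ trs.Nodup ∧
       (∀ a, d.out x a ↔ a ∈ outs) ∧
       (∀ a x', x' ∈ d.tr x a ↔ (a, x') ∈ trs) ∧
       Eqv (s x) (sumList (outs.map SExp.act ++
         trs.map (fun p => SExp.seq (SExp.act p.1) (s p.2)))))
    ↔ Prechart.IsHom d q (fun x => Quotient.mk (eqvSetoid A) (s x)) :=
  stmt5_general c hco hct q hq d s
end

section
/- Every minimal cycle in the transition system of 1-free star expressions has the form (e*f)g₁⋯g_l → e₁(e*f)g₁⋯g_l → ⋯ → e_m(e*f)g₁⋯g_l → (e*f)g₁⋯g_l for some expressions e, e₁,…,e_m, f, g₁,…,g_l with l ≥ 0, where sequential composition associates to the left. -/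
namespace Stmt9Aux

variable {A : Type}

def ssize : SExp A → ℕ
  | .act _ => 1
  | .zero => 1
  | .add a b => ssize a + ssize b + 1
  | .seq a b => ssize a + ssize b + 1
  | .star a b => ssize a + ssize b + 1

def Sub (x : SExp A) : SExp A → Prop
  | .act a => x = .act a
  | .zero => x = .zero
  | .add a b => x = .add a b ∨ Sub x a ∨ Sub x b
  | .seq a b => x = .seq a b ∨ Sub x a ∨ Sub x b
  | .star a b => x = .star a b ∨ Sub x a ∨ Sub x b

def IsSeqE (e : SExp A) : Prop := ∃ x y, e = .seq x y

theorem Sub.refl (x : SExp A) : Sub x x := by cases x <;> simp [Sub]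

theorem Sub.size : ∀ (y x : SExp A), Sub x y → ssize x ≤ ssize y := by
  intro y
  induction y with
  | act a => intro x hx; simp only [Sub] at hx; subst hx; simp
  | zero => intro x hx; simp only [Sub] at hx; subst hx; simp
  | add a b iha ihb =>
      intro x hx; simp only [Sub] at hx
      rcases hx with rfl | hx | hx
      · exact le_rfl
      · have := iha x hx; simp [ssize]; omega
      · have := ihb x hx; simp [ssize]; omega
  | seq a b iha ihb =>
      intro x hx; simp only [Sub] at hx
      rcases hx with rfl | hx | hx
      · exact le_rfl
      · have := iha x hx; simp [ssize]; omega
      · have := ihb x hx; simp [ssize]; omega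
  | star a b iha ihb =>
      intro x hx; simp only [Sub] at hx
      rcases hx with rfl | hx | hx
      · exact le_rfl
      · have := iha x hx; simp [ssize]; omega
      · have := ihb x hx; simp [ssize]; omega


theorem str_sub {g t : SExp A} {a : A} (h : STr g a t) :
    ∀ x, Sub x t → Sub x g ∨ IsSeqE x := by
  induction h with
  | @addL e₁ e₂ f a h ih =>
      intro x hx
      rcases ih x hx with h' | h'
      · left; simp only [Sub]; tauto
      · right; exact h'
  | @addR e₁ e₂ f a h ih =>
      intro x hx
      rcases ih x hx with h' | h'
      · left; simp only [Sub]; tauto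
      · right; exact h'
  | @seqO e₁ e₂ a h =>
      intro x hx; left; simp only [Sub]; tauto
  | @seqT e₁ e₂ f a h ih =>
      intro x hx
      simp only [Sub] at hx
      rcases hx with rfl | hx | hx
      · right; exact ⟨_, _, rfl⟩
      · rcases ih x hx with h' | h'
        · left; simp only [Sub]; tauto
        · right; exact h'
      · left; simp only [Sub]; tauto
  | @starR e₁ e₂ f a h ih =>
      intro x hx
      rcases ih x hx with h' | h'
      · left; simp only [Sub]; tauto
      · right; exact h'
  | @starL e₁ e₂ f a h ih =>
      intro x hx
      simp only [Sub] at hx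
      rcases hx with rfl | hx | hx
      · right; exact ⟨_, _, rfl⟩
      · rcases ih x hx with h' | h'
        · left; simp only [Sub]; tauto
        · right; exact h'
      · left; exact hx
  | @starO e₁ e₂ a h => intro x hx; left; exact hx

def Step (x y : SExp A) : Prop := ∃ a, STr x a y

theorem chain_sub {t₀ t₁ g : SExp A} (hp : Relation.ReflTransGen Step t₀ t₁)
    (h0 : ∀ x, Sub x t₀ → Sub x g ∨ IsSeqE x) :
    ∀ x, Sub x t₁ → Sub x g ∨ IsSeqE x := by
  induction hp with
  | refl => exact h0
  | tail hab hbc ih =>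
      intro x hx
      rcases hbc with ⟨a, hbc⟩
      rcases str_sub hbc x hx with h' | h'
      · exact ih x h'
      · right; exact h'

theorem str_seq_inv {x y t : SExp A} {a : A} (h : STr (.seq x y) a t) :
    (SOut x a ∧ t = y) ∨ ∃ f, STr x a f ∧ t = .seq f y := by
  cases h with
  | seqO ho => exact Or.inl ⟨ho, rfl⟩
  | seqT h' => exact Or.inr ⟨_, h', rfl⟩

theorem str_star_inv {x y t : SExp A} {a : A} (h : STr (.star x y) a t) :
    (STr y a t) ∨ (∃ f, STr x a f ∧ t = .seq f (.star x y)) ∨ (SOut x a ∧ t = .star x y) := by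
  cases h with
  | starR h' => exact Or.inl h'
  | starL h' => exact Or.inr (Or.inl ⟨_, h', rfl⟩)
  | starO h' => exact Or.inr (Or.inr ⟨h', rfl⟩)

theorem str_add_inv {x y t : SExp A} {a : A} (h : STr (.add x y) a t) :
    STr x a t ∨ STr y a t := by
  cases h with
  | addL h' => exact Or.inl h'
  | addR h' => exact Or.inr h'

theorem str_act_inv {b : A} {t : SExp A} {a : A} (h : STr (.act b) a t) : False := by cases h

theorem str_zero_inv {t : SExp A} {a : A} (h : STr .zero a t) : False := by cases h

theorem loop_star {g t : SExp A} {a : A} (h : STr g a t) (heq : t = g)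
    (hns : ¬ IsSeqE g) : ∃ e f, g = .star e f := by
  cases h with
  | @addL e₁ e₂ f a h' =>
      exfalso
      subst heq
      rcases str_sub h' _ (Sub.refl (SExp.add e₁ e₂)) with hs | hs
      · have := Sub.size _ _ hs; simp [ssize] at this
      · rcases hs with ⟨x, y, hxy⟩; cases hxy
  | @addR e₁ e₂ f a h' =>
      exfalso
      subst heq
      rcases str_sub h' _ (Sub.refl (SExp.add e₁ e₂)) with hs | hs
      · have := Sub.size _ _ hs; simp [ssize] at this
      · rcases hs with ⟨x, y, hxy⟩; cases hxy
  | seqO h' => exact absurd ⟨_, _, rfl⟩ hns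
  | seqT h' => exact absurd ⟨_, _, rfl⟩ hns
  | starR h' => exact ⟨_, _, rfl⟩
  | starL h' => exact ⟨_, _, rfl⟩
  | starO h' => exact ⟨_, _, rfl⟩

def lftE : SExp A → SExp A
  | .seq x _ => x
  | e => e

def rgtE : SExp A → SExp A
  | .seq _ y => y
  | e => e

theorem seq_eta {e : SExp A} (h : IsSeqE e) : e = .seq (lftE e) (rgtE e) := by
  obtain ⟨x, y, rfl⟩ := h; rfl

theorem zmod_cycle_le {m : ℕ} (s : ZMod (m+1) → ℕ)
    (hdec : ∀ j, s (j+1) ≤ s j) : ∀ (n : ℕ) (j), s (j + n) ≤ s j := by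
  intro n
  induction n with
  | zero => simp
  | succ n ih =>
      intro j
      have e : (j + ((n+1 : ℕ) : ZMod (m+1))) = (j + (n : ZMod (m+1))) + 1 := by
        push_cast; ring
      rw [e]
      exact le_trans (hdec (j + (n : ZMod (m+1)))) (ih j)

theorem zmod_add_m_cancel {m : ℕ} (j : ZMod (m+1)) : j + 1 + (m : ZMod (m+1)) = j := by
  have hm : ((m : ZMod (m+1)) + 1) = 0 := by
    have := ZMod.natCast_self (m+1); push_cast at this; exact this
  rw [add_assoc, add_comm (1 : ZMod (m+1)) (m : ZMod (m+1)), hm, add_zero]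

theorem zmod_cycle_const {m : ℕ} (s : ZMod (m+1) → ℕ)
    (hdec : ∀ j, s (j+1) ≤ s j) : ∀ j, s (j+1) = s j := by
  intro j
  have h1 : s (j + 1 + (m : ZMod (m+1))) ≤ s (j+1) := zmod_cycle_le s hdec m (j+1)
  rw [zmod_add_m_cancel j] at h1
  exact le_antisymm (hdec j) h1

theorem zmod_cycle_eq {m : ℕ} {α : Type*} (c : ZMod (m+1) → α)
    (h : ∀ j, c (j+1) = c j) : ∀ j j', c j = c j' := by
  have key : ∀ (n : ℕ) (j), c (j + n) = c j := by
    intro n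
    induction n with
    | zero => simp
    | succ n ih =>
        intro j
        have e : (j + ((n+1 : ℕ) : ZMod (m+1))) = (j + (n : ZMod (m+1))) + 1 := by
          push_cast; ring
        rw [e, h, ih]
  intro j j'
  have := key (j' - j).val j
  rw [ZMod.natCast_rightInverse (j' - j), add_sub_cancel] at this
  exact this.symm


theorem zmod_cast_ne_zero {m i : ℕ} (h1 : 0 < i) (h2 : i < m + 1) :
    ((i : ℕ) : ZMod (m+1)) ≠ 0 := by
  intro h
  rw [ZMod.natCast_eq_zero_iff] at h
  have := Nat.le_of_dvd h1 h
  omega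

theorem main_aux (N : ℕ) : ∀ {A : Type} (m : ℕ) (h : ZMod (m+1) → SExp A),
    (∑ j, ssize (h j)) < N →
    (∀ i, ∃ a, STr (h i) a (h (i+1))) →
    Function.Injective h →
    ∃ (k : ZMod (m + 1)) (e f : SExp A) (gs : List (SExp A)) (es : Fin m → SExp A),
      h k = gs.foldl SExp.seq (SExp.star e f) ∧
      ∀ i : Fin m, h (k + (((i : ℕ) + 1 : ℕ) : ZMod (m + 1)))
        = gs.foldl SExp.seq (SExp.seq (es i) (SExp.star e f)) := by
  induction N with
  | zero => intro A m h hN; omega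
  | succ N ih =>
    intro A m h hN hcyc hinj
    by_cases hall : ∀ j, IsSeqE (h j)
    · -- every state in the cycle is a sequential composition
      set y : ZMod (m+1) → SExp A := fun j => lftE (h j) with hy
      set c : ZMod (m+1) → SExp A := fun j => rgtE (h j) with hc
      have heq : ∀ j, h j = .seq (y j) (c j) := fun j => seq_eta (hall j)
      have disj : ∀ j, c (j+1) = c j ∨ ssize (c (j+1)) < ssize (c j) := by
        intro j
        obtain ⟨a, ht⟩ := hcyc j
        rw [heq j] at ht
        rcases str_seq_inv ht with ⟨ho, hteq⟩ | ⟨f, hf, hteq⟩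
        · right
          rw [heq (j+1)] at hteq
          rw [← hteq]
          simp [ssize]
        · left
          have h2 := (heq (j+1)).symm.trans hteq
          have h3 := congrArg rgtE h2
          simpa only [rgtE] using h3
      have hdec : ∀ j, ssize (c (j+1)) ≤ ssize (c j) := by
        intro j
        rcases disj j with h' | h'
        · rw [h']
        · omega
      have hsz : ∀ j, ssize (c (j+1)) = ssize (c j) :=
        zmod_cycle_const (fun j => ssize (c j)) hdec
      have ceq : ∀ j, c (j+1) = c j := by
        intro j
        rcases disj j with h' | h'
        · exact h'
        · exact absurd (hsz j) (by omega)
      have cconst : ∀ j j', c j = c j' := zmod_cycle_eq c ceq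
      have hstepy : ∀ j, ∃ a, STr (y j) a (y (j+1)) := by
        intro j
        obtain ⟨a, ht⟩ := hcyc j
        rw [heq j] at ht
        rcases str_seq_inv ht with ⟨ho, hteq⟩ | ⟨f, hf, hteq⟩
        · exfalso
          rw [heq (j+1), ceq j] at hteq
          have := congrArg ssize hteq
          simp [ssize] at this
          omega
        · refine ⟨a, ?_⟩
          have h2 := (heq (j+1)).symm.trans hteq
          rw [ceq j] at h2
          have : y (j+1) = f := by injection h2
          rw [this]; exact hf
      have yinj : Function.Injective y := by
        intro j1 j2 hyy
        apply hinj
        rw [heq j1, heq j2, hyy, cconst j1 j2]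
      have hlt : (∑ j, ssize (y j)) < ∑ j, ssize (h j) := by
        apply Finset.sum_lt_sum_of_nonempty Finset.univ_nonempty
        intro j _
        rw [heq j]
        simp [ssize]
      obtain ⟨k, e, f, gs, es, hk1, hk2⟩ := ih m y (by omega) hstepy yinj
      refine ⟨k, e, f, gs ++ [c k], es, ?_, ?_⟩
      · rw [heq k, hk1]
        simp [List.foldl_append]
      · intro i
        rw [heq _, hk2 i, cconst (k + (((i : ℕ) + 1 : ℕ) : ZMod (m+1))) k]
        simp [List.foldl_append]
    · -- some state is not a seq
      push_neg at hall
      obtain ⟨k, hk⟩ := hall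
      by_cases hm : m = 0
      · subst hm
        obtain ⟨a, ht⟩ := hcyc k
        haveI : Subsingleton (ZMod (0+1)) := inferInstanceAs (Subsingleton (Fin 1))
        have hkk : h (k+1) = h k := congrArg h (Subsingleton.elim _ _)
        rw [hkk] at ht
        obtain ⟨e, f, hef⟩ := loop_star ht rfl hk
        exact ⟨k, e, f, [], fun i => i.elim0, by simpa using hef, fun i => i.elim0⟩
      · -- m ≥ 1
        obtain ⟨a, ht⟩ := hcyc k
        have reach : ∀ (j : ZMod (m+1)) (n : ℕ),
            Relation.ReflTransGen Step (h j) (h (j + (n : ZMod (m+1)))) := by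
          intro j n
          induction n with
          | zero => simpa using Relation.ReflTransGen.refl
          | succ n ihn =>
              have e : (j + ((n+1 : ℕ) : ZMod (m+1))) = (j + (n : ZMod (m+1))) + 1 := by
                push_cast; ring
              rw [e]
              exact ihn.tail (hcyc _)
        have hpath : Relation.ReflTransGen Step (h (k+1)) (h k) := by
          have := reach (k+1) m
          rwa [zmod_add_m_cancel k] at this
        rcases hE : h k with ⟨b⟩ | _ | ⟨u, v⟩ | ⟨u, v⟩ | ⟨s, u⟩
        · rw [hE] at ht; exact absurd ht str_act_inv
        · rw [hE] at ht; exact absurd ht str_zero_inv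
        · -- add: impossible
          exfalso
          rw [hE] at ht
          rcases str_add_inv ht with h1 | h1 <;>
          · rcases chain_sub hpath (str_sub h1) (h k) (Sub.refl _) with hs | hs
            · have h2 := Sub.size _ _ hs
              rw [hE] at h2; simp [ssize] at h2
            · rw [hE] at hs; rcases hs with ⟨x', y', hxy⟩; cases hxy
        · exact absurd ⟨u, v, hE⟩ hk
        · -- star s u
          rw [hE] at ht
          rcases str_star_inv ht with h1 | ⟨f0, hf0, h1⟩ | ⟨ho, h1⟩
          · -- starR: impossible
            exfalso
            rcases chain_sub hpath (str_sub h1) (h k) (Sub.refl _) with hs | hs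
            · have h2 := Sub.size _ _ hs
              rw [hE] at h2; simp [ssize] at h2
            · rw [hE] at hs; rcases hs with ⟨x', y', hxy⟩; cases hxy
          · -- starL: the good case
            have claim : ∀ i : ℕ, i < m →
                ∃ yy, h (k + ((i+1 : ℕ) : ZMod (m+1))) = .seq yy (.star s u) := by
              intro i
              induction i with
              | zero => intro _; exact ⟨f0, by simpa using h1⟩
              | succ i ihi =>
                  intro hi
                  obtain ⟨yy, hyy⟩ := ihi (by omega)
                  obtain ⟨a', ht'⟩ := hcyc (k + ((i+1 : ℕ) : ZMod (m+1)))
                  rw [hyy] at ht'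
                  have ecast : k + ((i+1 : ℕ) : ZMod (m+1)) + 1
                      = k + ((i+1+1 : ℕ) : ZMod (m+1)) := by push_cast; ring
                  rcases str_seq_inv ht' with ⟨_, he⟩ | ⟨f', hf', he⟩
                  · exfalso
                    rw [ecast, ← hE] at he
                    have := hinj he
                    have h0 : ((i+1+1 : ℕ) : ZMod (m+1)) = 0 := by
                      have h3 : k + ((i+1+1 : ℕ) : ZMod (m+1)) = k + 0 := by
                        rw [add_zero]; exact this
                      exact add_left_cancel h3
                    exact zmod_cast_ne_zero (by omega) (by omega) h0
                  · exact ⟨f', by rw [← ecast]; exact he⟩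
            refine ⟨k, s, u, [], fun i => (claim i i.isLt).choose, by simpa using hE, ?_⟩
            intro i
            simpa using (claim i i.isLt).choose_spec
          · -- starO: impossible since m ≥ 1
            exfalso
            rw [← hE] at h1
            have := hinj h1
            have h0 : ((1 : ℕ) : ZMod (m+1)) = 0 := by
              have : k + 1 = k + 0 := by rw [add_zero]; exact this
              have := add_left_cancel this
              simpa using this
            exact zmod_cast_ne_zero (by omega) (by omega) h0

end Stmt9Aux

/-- Every minimal cycle of 1-free star expressions has, up to rotation, the
form `(e*f)g₁⋯g_l → e₁(e*f)g₁⋯g_l → ⋯ → e_m(e*f)g₁⋯g_l → (e*f)g₁⋯g_l`,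
with sequential composition associating to the left. -/
theorem stmt9 {A : Type} (m : ℕ) (h : ZMod (m + 1) → SExp A)
    (hcyc : ∀ i, ∃ a, STr (h i) a (h (i + 1)))
    (hinj : Function.Injective h) :
    ∃ (k : ZMod (m + 1)) (e f : SExp A) (gs : List (SExp A)) (es : Fin m → SExp A),
      h k = gs.foldl SExp.seq (SExp.star e f) ∧
      ∀ i : Fin m, h (k + (((i : ℕ) + 1 : ℕ) : ZMod (m + 1)))
        = gs.foldl SExp.seq (SExp.seq (es i) (SExp.star e f)) := by
  exact Stmt9Aux.main_aux ((∑ j, Stmt9Aux.ssize (h j)) + 1) m h (Nat.lt_succ_self _) hcyc hinj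
end

section
/- If X is a well-layered prechart and U ⊆ X is a subcoalgebra of X, then U is well-layered: the restriction of any layering witness of X to U is a layering witness for U. -/
universe u

/-- A transition system with output carrying an entry/body labelling:
a coalgebra for `2 × Pfin({e,b} × (−))`, presented by separate entry- and
body-transition relations. -/
structure EBL (X : Type u) where
  out : X → Prop
  etr : X → Set X
  btr : X → Set X
  fin : ∀ x, (etr x ∪ btr x).Finite

namespace EBL

variable {X : Type u}

/-- A single (entry or body) transition of the underlying transition system. -/
def step (L : EBL X) (x y : X) : Prop := y ∈ L.etr x ∨ y ∈ L.btr x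

/-- `x ⇝ y`: there is a path `x →e v₁ →b ⋯ →b y` never revisiting `x`. -/
def diredge (L : EBL X) (x y : X) : Prop :=
  ∃ v, v ∈ L.etr x ∧ v ≠ x ∧ Relation.ReflTransGen (fun u w => w ∈ L.btr u ∧ w ≠ x) v y

/-- The five conditions making an entry/body labelling a layering witness:
locally finite, flat, fully specified, layered, and goto-free. -/
def IsLayeringWitness (L : EBL X) : Prop :=
  (∀ x, {y | Relation.ReflTransGen L.step x y}.Finite) ∧
  (∀ x y, y ∈ L.etr x → y ∉ L.btr x) ∧
  (∀ x, ¬ Relation.TransGen (fun u w => w ∈ L.btr u) x x) ∧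
  (∀ x y, y ∈ L.etr x → y ≠ x → Relation.TransGen L.step y x) ∧
  (∀ x, ¬ Relation.TransGen L.diredge x x) ∧
  (∀ x y, L.diredge x y → ¬ L.out y)

/-- `L` is a layering witness for the prechart `c`: its underlying transition
system (forgetting action labels) is that of `c`, and it satisfies the five
layering-witness conditions. -/
def IsWitnessFor {A : Type} (L : EBL X) (c : Prechart A X) : Prop :=
  (∀ x, L.out x ↔ ∃ a, c.out x a) ∧
  (∀ x, L.etr x ∪ L.btr x = ⋃ a, c.tr x a) ∧
  L.IsLayeringWitness

end EBL

/-- A prechart is well-layered if it admits a layering witness. -/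
def WellLayered {A : Type} {X : Type u} (c : Prechart A X) : Prop :=
  ∃ L : EBL X, L.IsWitnessFor c

/-- The restriction of a prechart to a subset `U` of its carrier. -/
def Prechart.restrict {A : Type} {X : Type u} (c : Prechart A X) (U : Set X) :
    Prechart A U where
  out u a := c.out u.1 a
  tr u a := {v : U | v.1 ∈ c.tr u.1 a}
  fin u a := (c.fin u.1 a).preimage Subtype.val_injective.injOn

/-- The restriction of an entry/body labelling to a subset `U`. -/
def EBL.restrict {X : Type u} (L : EBL X) (U : Set X) : EBL U where
  out u := L.out u.1
  etr u := {v : U | v.1 ∈ L.etr u.1}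
  btr u := {v : U | v.1 ∈ L.btr u.1}
  fin u := by
    have h : ({v : U | v.1 ∈ L.etr u.1} ∪ {v : U | v.1 ∈ L.btr u.1})
        = Subtype.val ⁻¹' (L.etr u.1 ∪ L.btr u.1) := by
      ext v; simp [Set.mem_union, Set.preimage]
    rw [h]
    exact (L.fin u.1).preimage Subtype.val_injective.injOn

/-!
Every layering condition except full specification only forbids certain paths or bounds the
states reachable along them, and paths in `U` are paths in `X`, so these conditions pass to the
restriction. Full specification asks for a return path `y →⁺ x`; it exists in `X`, and it stays
inside `U` because a subcoalgebra is closed under transitions.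
-/

theorem Relation.TransGen.subtype_of_closed {X : Type u} {r : X → X → Prop} {U : Set X}
    (hU : ∀ x ∈ U, ∀ y, r x y → y ∈ U) {x z : X} (hx : x ∈ U) (h : Relation.TransGen r x z) :
    ∃ hz : z ∈ U, Relation.TransGen (fun u v : U => r u v) ⟨x, hx⟩ ⟨z, hz⟩ := by
  induction h with
  | single hxz => exact ⟨hU x hx _ hxz, .single hxz⟩
  | tail _ hyz ih =>
    obtain ⟨hy, hxy⟩ := ih
    exact ⟨hU _ hy _ hyz, hxy.tail hyz⟩

namespace EBL

variable {X : Type u} (L : EBL X) (U : Set X)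

theorem diredge_of_restrict {u v : U} (h : (L.restrict U).diredge u v) : L.diredge u v := by
  obtain ⟨w, hw, hwu, hwv⟩ := h
  refine ⟨w, hw, Subtype.coe_ne_coe.mpr hwu, ?_⟩
  exact Relation.ReflTransGen.lift Subtype.val
    (fun _ _ ⟨hb, hne⟩ => ⟨hb, Subtype.coe_ne_coe.mpr hne⟩) _ _ hwv

variable {L}

theorem IsLayeringWitness.restrict (hL : L.IsLayeringWitness)
    (hU : ∀ x ∈ U, ∀ y, L.step x y → y ∈ U) : (L.restrict U).IsLayeringWitness := by
  obtain ⟨hfin, hflat, hbody, hfull, hlay, hgoto⟩ := hL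
  refine ⟨fun u => ?_, fun u v => hflat u v, fun u hu => ?_, fun u v he hne => ?_,
    fun u hu => ?_, fun u v huv => hgoto u v (L.diredge_of_restrict U huv)⟩
  · refine ((hfin u).preimage Subtype.val_injective.injOn).subset fun v hv => ?_
    exact Relation.ReflTransGen.lift Subtype.val (fun _ _ h => h) _ _ hv
  · exact hbody u (Relation.TransGen.lift Subtype.val (fun _ _ h => h) _ _ hu)
  · exact (Relation.TransGen.subtype_of_closed hU v.2
      (hfull u v he (Subtype.coe_ne_coe.mpr hne))).2
  · exact hlay u (Relation.TransGen.lift Subtype.val (fun _ _ => L.diredge_of_restrict U) _ _ hu)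

variable {A : Type} {c : Prechart A X}

theorem step_closed_of_subcoalgebra (htr : ∀ x, L.etr x ∪ L.btr x = ⋃ a, c.tr x a)
    (hU : ∀ x ∈ U, ∀ a, c.tr x a ⊆ U) : ∀ x ∈ U, ∀ y, L.step x y → y ∈ U := by
  intro x hx y hxy
  obtain ⟨a, hy⟩ := Set.mem_iUnion.mp (htr x ▸ hxy : y ∈ ⋃ a, c.tr x a)
  exact hU x hx a hy

theorem restrict_etr_union_btr (htr : ∀ x, L.etr x ∪ L.btr x = ⋃ a, c.tr x a) (u : U) :
    (L.restrict U).etr u ∪ (L.restrict U).btr u = ⋃ a, (c.restrict U).tr u a := by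
  ext v
  simpa [EBL.restrict, Prechart.restrict] using congrArg (v.1 ∈ ·) (htr u)

theorem IsWitnessFor.restrict (hL : L.IsWitnessFor c) (hU : ∀ x ∈ U, ∀ a, c.tr x a ⊆ U) :
    (L.restrict U).IsWitnessFor (c.restrict U) :=
  ⟨fun u => hL.1 u, restrict_etr_union_btr U hL.2.1,
    hL.2.2.restrict U (step_closed_of_subcoalgebra U hL.2.1 hU)⟩

end EBL

/-- Subcoalgebras of well-layered precharts are well-layered: the restriction
of any layering witness to a subcoalgebra `U` is a layering witness for the
restricted prechart. -/
theorem stmt10 {A : Type} {X : Type u} (c : Prechart A X) (U : Set X)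
    (hU : ∀ x ∈ U, ∀ a, c.tr x a ⊆ U)
    (L : EBL X) (hL : L.IsWitnessFor c) :
    (L.restrict U).IsWitnessFor (c.restrict U) ∧ WellLayered (c.restrict U) := by
  have hwit := hL.restrict U hU
  exact ⟨hwit, _, hwit⟩
end

section
/- If R is a bisimulation equivalence on a prechart X, and (i, j) is a splitting (j ∘ i = id_U) with i : U ↪ X the inclusion of a subset and ker(j) ⊆ R, then Q = R ∩ (X × U) is a bisimulation between X and the rerouting X[i,j]. -/
universe u

/-- The rerouting of a prechart by a splitting `(i, j)`. -/
def Prechart.reroute {A : Type} {X : Type u} (c : Prechart A X) (U : Set X)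
    (j : X → ↥U) : Prechart A ↥U where
  out u a := c.out u.1 a
  tr u a := j '' c.tr u.1 a
  fin u a := (c.fin u.1 a).image j

/-- If `R` is a bisimulation equivalence on a prechart `X` and `(i, j)` is a
splitting with `ker j ⊆ R`, then `Q = R ∩ (X × U)` is a bisimulation between
`X` and the rerouting `X[i,j]`. -/
theorem stmt11 {A : Type} {X : Type u} (c : Prechart A X)
    (R : X → X → Prop) (hEq : Equivalence R) (hB : Prechart.IsBisim c c R)
    (U : Set X) (j : X → ↥U) (hsplit : ∀ u : ↥U, j u.1 = u)
    (hker : ∀ x x', j x = j x' → R x x') :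
    Prechart.IsBisim c (c.reroute U j) (fun x u => R x u.1) := by
  obtain ⟨e, ⟨ho1, ht1⟩, ⟨ho2, ht2⟩⟩ := hB
  -- key transfer facts from the given bisimulation
  have hout : ∀ x y, R x y → ∀ a, (c.out x a ↔ c.out y a) := by
    intro x y r a
    exact (ho1 ⟨(x, y), r⟩ a).symm.trans (ho2 ⟨(x, y), r⟩ a)
  have hfwd : ∀ x y, R x y → ∀ a, ∀ x' ∈ c.tr x a,
      ∃ y' ∈ c.tr y a, R x' y' := by
    intro x y r a x' hx'
    rw [ht1 ⟨(x, y), r⟩ a] at hx'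
    obtain ⟨q, hq, hq1⟩ := hx'
    refine ⟨q.1.2, ?_, hq1 ▸ q.2⟩
    rw [ht2 ⟨(x, y), r⟩ a]
    exact ⟨q, hq, rfl⟩
  have hbwd : ∀ x y, R x y → ∀ a, ∀ y' ∈ c.tr y a,
      ∃ x' ∈ c.tr x a, R x' y' := by
    intro x y r a y' hy'
    rw [ht2 ⟨(x, y), r⟩ a] at hy'
    obtain ⟨q, hq, hq2⟩ := hy'
    refine ⟨q.1.1, ?_, hq2 ▸ q.2⟩
    rw [ht1 ⟨(x, y), r⟩ a]
    exact ⟨q, hq, rfl⟩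
  -- every y is R-related to (j y) (as element of X)
  have hRj : ∀ y : X, R y (j y).1 := by
    intro y
    exact hker y (j y).1 (by rw [hsplit (j y)])
  refine ⟨{ out := fun p a => c.out p.1.1 a,
            tr := fun p a => {q | q.1.1 ∈ c.tr p.1.1 a ∧ q.1.2 ∈ j '' c.tr p.1.2.1 a},
            fin := ?_ }, ⟨fun p a => Iff.rfl, ?_⟩, ⟨?_, ?_⟩⟩
  · intro p a
    have hfin : ((c.tr p.1.1 a) ×ˢ (j '' c.tr p.1.2.1 a)).Finite :=
      (c.fin p.1.1 a).prod ((c.fin p.1.2.1 a).image j)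
    have : (Subtype.val ⁻¹'
        ((c.tr p.1.1 a) ×ˢ (j '' c.tr p.1.2.1 a)) :
        Set {p : X × ↥U // R p.1 p.2.1}).Finite :=
      hfin.preimage (Subtype.val_injective.injOn)
    exact this.subset (fun q hq => ⟨hq.1, hq.2⟩)
  · -- first projection is a hom on transitions
    intro p a
    ext x'
    constructor
    · intro hx'
      obtain ⟨y', hy', r⟩ := hfwd p.1.1 p.1.2.1 p.2 a x' hx'
      exact ⟨⟨(x', j y'), hEq.trans r (hRj y')⟩, ⟨hx', ⟨y', hy', rfl⟩⟩, rfl⟩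
    · rintro ⟨q, hq, rfl⟩
      exact hq.1
  · -- out for second projection
    intro p a
    exact hout p.1.1 p.1.2.1 p.2 a
  · -- second projection is a hom on transitions
    intro p a
    show j '' c.tr p.1.2.1 a = _
    ext u'
    constructor
    · rintro ⟨y', hy', rfl⟩
      obtain ⟨x', hx', r⟩ := hbwd p.1.1 p.1.2.1 p.2 a y' hy'
      exact ⟨⟨(x', j y'), hEq.trans r (hRj y')⟩, ⟨hx', ⟨y', hy', rfl⟩⟩, rfl⟩
    · rintro ⟨q, hq, rfl⟩
      exact hq.2
end

section
/- Let G be a weak-pullback-preserving endofunctor on Sets and C a class of finite G-coalgebras closed under isomorphism. If for every X ∈ C and every nontrivial bisimulation equivalence R on X there exists a nontrivial R-rerouting of X belonging to C, then C is closed under homomorphic images: for every X ∈ C and bisimulation equivalence R on X, the quotient X/R is (isomorphic to a coalgebra) in C. -/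
universe u

/-- An endofunctor on the category of sets. -/
structure SetFunctor : Type (u + 1) where
  obj : Type u → Type u
  map : {X Y : Type u} → (X → Y) → obj X → obj Y
  map_id : ∀ {X : Type u}, map (id : X → X) = id
  map_comp : ∀ {X Y Z : Type u} (f : X → Y) (g : Y → Z), map (g ∘ f) = map g ∘ map f

namespace SetFunctor

variable (G : SetFunctor.{u})

/-- `h` is a `G`-coalgebra homomorphism from `(X, dX)` to `(Y, dY)`. -/
def IsHom {X Y : Type u} (dX : X → G.obj X) (dY : Y → G.obj Y) (h : X → Y) : Prop :=
  ∀ x, dY (h x) = G.map h (dX x)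

/-- `R` is a bisimulation between `(X, dX)` and `(Y, dY)`: it carries a
coalgebra structure making both projections homomorphisms. -/
def IsBisim {X Y : Type u} (dX : X → G.obj X) (dY : Y → G.obj Y) (R : X → Y → Prop) : Prop :=
  ∃ dR : {p : X × Y // R p.1 p.2} → G.obj {p : X × Y // R p.1 p.2},
    G.IsHom dR dX (fun p => p.1.1) ∧ G.IsHom dR dY (fun p => p.1.2)

/-- Two states are bisimilar if some bisimulation relates them. -/
def Bisimilar {X Y : Type u} (dX : X → G.obj X) (dY : Y → G.obj Y) (x : X) (y : Y) : Prop :=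
  ∃ R, G.IsBisim dX dY R ∧ R x y

/-- A class of `G`-coalgebras is collapsible if any two bisimilar states of
members of the class can be identified by homomorphisms into a common member. -/
def Collapsible (C : ∀ X : Type u, (X → G.obj X) → Prop) : Prop :=
  ∀ (X : Type u) (dX : X → G.obj X) (Y : Type u) (dY : Y → G.obj Y),
    C X dX → C Y dY → ∀ (x : X) (y : Y), G.Bisimilar dX dY x y →
      ∃ (Z : Type u) (dZ : Z → G.obj Z) (p : X → Z) (q : Y → Z),
        C Z dZ ∧ G.IsHom dX dZ p ∧ G.IsHom dY dZ q ∧ p x = q y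

/-- `G` preserves weak pullbacks (of cospans of functions). -/
def PreservesWeakPullbacks : Prop :=
  ∀ {X Y Z : Type u} (f : X → Z) (g : Y → Z) (u : G.obj X) (v : G.obj Y),
    G.map f u = G.map g v →
    ∃ w : G.obj {p : X × Y // f p.1 = g p.2},
      G.map (fun p => p.1.1) w = u ∧ G.map (fun p => p.1.2) w = v

/-- The canonical coalgebra structure on the coproduct (disjoint union). -/
def sumStr {X Y : Type u} (dX : X → G.obj X) (dY : Y → G.obj Y) :
    X ⊕ Y → G.obj (X ⊕ Y) :=
  Sum.elim (fun x => G.map Sum.inl (dX x)) (fun y => G.map Sum.inr (dY y))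

/-- The rerouting of a coalgebra `(X, dX)` by a splitting `(i, j)`,
`i : U ↪ X`, `j : X ↠ U`, `j ∘ i = id`: the coalgebra `(U, G(j) ∘ dX ∘ i)`. -/
def rerouteStr {X : Type u} (dX : X → G.obj X) (U : Set X) (j : X → ↥U) :
    ↥U → G.obj ↥U := fun u => G.map j (dX u.1)

end SetFunctor

/-- If every member of a class `C` of finite `G`-coalgebras (closed under
isomorphism) with a nontrivial bisimulation equivalence `R` admits a
nontrivial `R`-rerouting in `C`, then `C` is closed under homomorphic images:
for `X ∈ C` and a bisimulation equivalence `R` on `X`, the quotient `X/R` is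
isomorphic to a coalgebra in `C`. -/
theorem stmt12 (G : SetFunctor.{u}) (hWP : G.PreservesWeakPullbacks)
    (C : ∀ X : Type u, (X → G.obj X) → Prop)
    (hfin : ∀ (X : Type u) (dX : X → G.obj X), C X dX → Finite X)
    (hiso : ∀ (X : Type u) (dX : X → G.obj X) (Y : Type u) (dY : Y → G.obj Y),
        C X dX → (∃ h : X → Y, Function.Bijective h ∧ G.IsHom dX dY h) → C Y dY)
    (hre : ∀ (X : Type u) (dX : X → G.obj X), C X dX →
        ∀ R : X → X → Prop, Equivalence R → G.IsBisim dX dX R →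
        (∃ x y, R x y ∧ x ≠ y) →
        ∃ (U : Set X) (j : X → ↥U),
          (∀ u : ↥U, j u.1 = u) ∧ (∀ x x', j x = j x' → R x x') ∧
          U ≠ Set.univ ∧ C ↥U (G.rerouteStr dX U j)) :
    ∀ (X : Type u) (dX : X → G.obj X), C X dX →
      ∀ R : X → X → Prop, Equivalence R → G.IsBisim dX dX R →
        ∃ (Y : Type u) (dY : Y → G.obj Y) (h : X → Y),
          C Y dY ∧ G.IsHom dX dY h ∧ Function.Surjective h ∧
          ∀ x x', h x = h x' ↔ R x x' := by
  have key : ∀ n : ℕ, ∀ (X : Type u) (dX : X → G.obj X), C X dX →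
      ∀ R : X → X → Prop, Equivalence R → G.IsBisim dX dX R →
      Nat.card {p : X × X // R p.1 p.2 ∧ p.1 ≠ p.2} < n →
      ∃ (Y : Type u) (dY : Y → G.obj Y) (h : X → Y),
        C Y dY ∧ G.IsHom dX dY h ∧ Function.Surjective h ∧
        ∀ x x', h x = h x' ↔ R x x' := by
    intro n
    induction n with
    | zero => intro X dX _ R _ _ hlt; exact absurd hlt (Nat.not_lt_zero _)
    | succ n ih =>
      intro X dX hCX R hEq hBis hcard
      by_cases htriv : ∀ a b, R a b → a = b
      · refine ⟨X, dX, id, hCX, fun z => by simp [SetFunctor.IsHom, G.map_id],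
          Function.surjective_id, fun a b => ⟨fun h => (show a = b from h) ▸ hEq.refl a, htriv a b⟩⟩
      · push_neg at htriv
        obtain ⟨dR, hp1, hp2⟩ := hBis
        obtain ⟨U, j, hsplit, hker, hUne, hCU⟩ :=
          hre X dX hCX R hEq ⟨dR, hp1, hp2⟩ (by
            obtain ⟨a, b, hab, hne⟩ := htriv; exact ⟨a, b, hab, hne⟩)
        have hRj : ∀ z : X, R z (j z).1 := fun z => hker z _ (hsplit (j z)).symm
        set d' := G.rerouteStr dX U j with hd'
        set R' : ↥U → ↥U → Prop := fun u v => R u.1 v.1 with hR'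
        have hEq' : Equivalence R' :=
          ⟨fun u => hEq.refl _, fun h => hEq.symm h, fun h h' => hEq.trans h h'⟩
        let ψ : {p : X × X // R p.1 p.2} → {q : ↥U × ↥U // R' q.1 q.2} := fun p =>
          ⟨(j p.1.1, j p.1.2),
            hEq.trans (hEq.symm (hRj p.1.1)) (hEq.trans p.2 (hRj p.1.2))⟩
        have hBis' : G.IsBisim d' d' R' := by
          refine ⟨fun q => G.map ψ (dR ⟨(q.1.1.1, q.1.2.1), q.2⟩), fun q => ?_, fun q => ?_⟩
          · have h1 : (fun q : {q : ↥U × ↥U // R' q.1 q.2} => q.1.1) ∘ ψ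
                = j ∘ (fun p : {p : X × X // R p.1 p.2} => p.1.1) := rfl
            calc d' q.1.1 = G.map j (dX q.1.1.1) := rfl
              _ = G.map j (G.map (fun p : {p : X × X // R p.1 p.2} => p.1.1)
                    (dR ⟨(q.1.1.1, q.1.2.1), q.2⟩)) := by rw [← hp1 ⟨(q.1.1.1, q.1.2.1), q.2⟩]
              _ = G.map ((fun q : {q : ↥U × ↥U // R' q.1 q.2} => q.1.1) ∘ ψ)
                    (dR ⟨(q.1.1.1, q.1.2.1), q.2⟩) := by
                    rw [h1, G.map_comp]; rfl
              _ = G.map (fun q : {q : ↥U × ↥U // R' q.1 q.2} => q.1.1)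
                    (G.map ψ (dR ⟨(q.1.1.1, q.1.2.1), q.2⟩)) := by rw [G.map_comp]; rfl
          · have h1 : (fun q : {q : ↥U × ↥U // R' q.1 q.2} => q.1.2) ∘ ψ
                = j ∘ (fun p : {p : X × X // R p.1 p.2} => p.1.2) := rfl
            calc d' q.1.2 = G.map j (dX q.1.2.1) := rfl
              _ = G.map j (G.map (fun p : {p : X × X // R p.1 p.2} => p.1.2)
                    (dR ⟨(q.1.1.1, q.1.2.1), q.2⟩)) := by rw [← hp2 ⟨(q.1.1.1, q.1.2.1), q.2⟩]
              _ = G.map ((fun q : {q : ↥U × ↥U // R' q.1 q.2} => q.1.2) ∘ ψ)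
                    (dR ⟨(q.1.1.1, q.1.2.1), q.2⟩) := by
                    rw [h1, G.map_comp]; rfl
              _ = G.map (fun q : {q : ↥U × ↥U // R' q.1 q.2} => q.1.2)
                    (G.map ψ (dR ⟨(q.1.1.1, q.1.2.1), q.2⟩)) := by rw [G.map_comp]; rfl
        -- cardinality decrease
        have hXfin : Finite X := hfin X dX hCX
        have hcard' : Nat.card {q : ↥U × ↥U // R' q.1 q.2 ∧ q.1 ≠ q.2}
            < Nat.card {p : X × X // R p.1 p.2 ∧ p.1 ≠ p.2} := by
          obtain ⟨x₀, hx₀⟩ := Set.ne_univ_iff_exists_notMem U |>.mp hUne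
          let f : {q : ↥U × ↥U // R' q.1 q.2 ∧ q.1 ≠ q.2} → {p : X × X // R p.1 p.2 ∧ p.1 ≠ p.2} :=
            fun q => ⟨(q.1.1.1, q.1.2.1), q.2.1, fun h => q.2.2 (Subtype.ext h)⟩
          have hfinj : Function.Injective f := by
            intro a b hab
            have h0 := Subtype.ext_iff.mp hab
            have h1 : (a.1.1.1 : X) = b.1.1.1 := congrArg Prod.fst h0
            have h2 : (a.1.2.1 : X) = b.1.2.1 := congrArg Prod.snd h0
            apply Subtype.ext
            apply Prod.ext (Subtype.ext h1) (Subtype.ext h2)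
          have hnm : (⟨(x₀, (j x₀).1), hRj x₀, fun h => hx₀ (by rw [show x₀ = ((j x₀ : ↥U) : X) from h]; exact (j x₀).2)⟩ :
              {p : X × X // R p.1 p.2 ∧ p.1 ≠ p.2}) ∉ Set.range f := by
            rintro ⟨q, hq⟩
            have : (q.1.1.1 : X) = x₀ := congrArg Prod.fst (Subtype.ext_iff.mp hq)
            exact hx₀ (this ▸ q.1.1.2)
          have i1 : Fintype {q : ↥U × ↥U // R' q.1 q.2 ∧ q.1 ≠ q.2} := Fintype.ofFinite _
          have i2 : Fintype {p : X × X // R p.1 p.2 ∧ p.1 ≠ p.2} := Fintype.ofFinite _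
          rw [Nat.card_eq_fintype_card, Nat.card_eq_fintype_card]
          exact Fintype.card_lt_of_injective_of_notMem f hfinj hnm
        obtain ⟨Y, dY, h', hCY, hHom', hSurj', hker'⟩ :=
          ih ↥U d' hCU R' hEq' hBis' (lt_of_lt_of_le hcard' (Nat.lt_succ_iff.mp hcard))
        refine ⟨Y, dY, fun z => h' (j z), hCY, ?_, ?_, ?_⟩
        · -- homomorphism
          intro z
          have hkerR : ∀ a b : X, h' (j a) = h' (j b) ↔ R a b := by
            intro a b
            rw [hker' (j a) (j b)]
            constructor
            · intro hr; exact hEq.trans (hRj a) (hEq.trans hr (hEq.symm (hRj b)))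
            · intro hr; exact hEq.trans (hEq.symm (hRj a)) (hEq.trans hr (hRj b))
          have heqmaps : (fun p : {p : X × X // R p.1 p.2} => h' (j p.1.1))
              = (fun p : {p : X × X // R p.1 p.2} => h' (j p.1.2)) := by
            funext p; exact (hkerR p.1.1 p.1.2).mpr p.2
          let p : {p : X × X // R p.1 p.2} := ⟨(z, (j z).1), hRj z⟩
          calc dY (h' (j z)) = G.map h' (d' (j z)) := hHom' (j z)
            _ = G.map h' (G.map j (dX (j z).1)) := rfl
            _ = G.map (h' ∘ j) (dX (j z).1) := (congrFun (G.map_comp j h') (dX (j z).1)).symm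
            _ = G.map (h' ∘ j) (G.map (fun p : {p : X × X // R p.1 p.2} => p.1.2) (dR p)) := by
                  rw [← hp2 p]
            _ = G.map ((h' ∘ j) ∘ (fun p : {p : X × X // R p.1 p.2} => p.1.2)) (dR p) :=
                  (congrFun (G.map_comp (fun p : {p : X × X // R p.1 p.2} => p.1.2) (h' ∘ j)) (dR p)).symm
            _ = G.map ((h' ∘ j) ∘ (fun p : {p : X × X // R p.1 p.2} => p.1.1)) (dR p) := by
                  have : ((h' ∘ j) ∘ (fun p : {p : X × X // R p.1 p.2} => p.1.2))
                      = ((h' ∘ j) ∘ (fun p : {p : X × X // R p.1 p.2} => p.1.1)) := by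
                    funext q
                    exact ((hkerR q.1.1 q.1.2).mpr q.2).symm
                  rw [this]
            _ = G.map (h' ∘ j) (G.map (fun p : {p : X × X // R p.1 p.2} => p.1.1) (dR p)) :=
                  congrFun (G.map_comp (fun p : {p : X × X // R p.1 p.2} => p.1.1) (h' ∘ j)) (dR p)
            _ = G.map (h' ∘ j) (dX z) := by rw [← hp1 p]
            _ = G.map (fun z => h' (j z)) (dX z) := rfl
        · -- surjective
          intro y'
          obtain ⟨u, hu⟩ := hSurj' y'
          exact ⟨u.1, show h' (j u.1) = y' by rw [hsplit u]; exact hu⟩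
        · -- kernel
          intro a b
          rw [hker' (j a) (j b)]
          constructor
          · intro hr; exact hEq.trans (hRj a) (hEq.trans hr (hEq.symm (hRj b)))
          · intro hr; exact hEq.trans (hEq.symm (hRj a)) (hEq.trans hr (hRj b))
  intro X dX hCX R hEq hBis
  exact key (Nat.card {p : X × X // R p.1 p.2 ∧ p.1 ≠ p.2} + 1) X dX hCX R hEq hBis
    (Nat.lt_succ_self _)
end

section
/- Assume G preserves weak pullbacks and has a final coalgebra, ≡ is a bisimulation equivalence on a G-coalgebra E, and C is a class of G-coalgebras closed under homomorphic images in which E/≡ is a final object. Then for all e, f ∈ E: e ≡ f if and only if e is bisimilar to f. -/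
universe u

theorem hom_comp (G : SetFunctor.{u}) {X Y Z : Type u} {dX : X → G.obj X}
    {dY : Y → G.obj Y} {dZ : Z → G.obj Z} {g : X → Y} {h : Y → Z}
    (hg : G.IsHom dX dY g) (hh : G.IsHom dY dZ h) : G.IsHom dX dZ (h ∘ g) := by
  intro x
  calc dZ (h (g x)) = G.map h (dY (g x)) := hh _
    _ = G.map h (G.map g (dX x)) := by rw [hg]
    _ = G.map (h ∘ g) (dX x) := (congrFun (G.map_comp g h) (dX x)).symm

/-- Global approach to completeness: if `G` preserves weak pullbacks and has a
final coalgebra, `≡` is a bisimulation equivalence on `E`, and `C` is a class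
of `G`-coalgebras closed under homomorphic images in which `E/≡` is final,
then `e ≡ f` iff `e` and `f` are bisimilar. -/
theorem stmt15 (G : SetFunctor.{u}) (hWP : G.PreservesWeakPullbacks)
    (hasFinal : ∃ (Z : Type u) (dZ : Z → G.obj Z),
        ∀ (X : Type u) (dX : X → G.obj X), ∃! h : X → Z, G.IsHom dX dZ h)
    (E : Type u) (dE : E → G.obj E)
    (s : Setoid E) (hbis : G.IsBisim dE dE s.r)
    (dQ : Quotient s → G.obj (Quotient s))
    (hq : G.IsHom dE dQ (Quotient.mk s))
    (C : ∀ X : Type u, (X → G.obj X) → Prop)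
    (himg : ∀ (X : Type u) (dX : X → G.obj X) (Y : Type u) (dY : Y → G.obj Y) (h : X → Y),
        C X dX → G.IsHom dX dY h → Function.Surjective h → C Y dY)
    (hQC : C (Quotient s) dQ)
    (hQfinal : ∀ (X : Type u) (dX : X → G.obj X), C X dX →
        ∃! h : X → Quotient s, G.IsHom dX dQ h) :
    ∀ e f : E, s.r e f ↔ G.Bisimilar dE dE e f := by
  classical
  intro e f
  constructor
  · intro hef
    exact ⟨s.r, hbis, hef⟩
  · rintro ⟨R, ⟨dR, h1, h2⟩, hR⟩
    obtain ⟨Z, dZ, hZ⟩ := hasFinal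
    obtain ⟨h, hh, -⟩ := hZ (Quotient s) dQ
    have hm : G.IsHom dE dZ (h ∘ Quotient.mk s) := hom_comp G hq hh
    have key : h (Quotient.mk s e) = h (Quotient.mk s f) := by
      obtain ⟨u, -, huniq⟩ := hZ _ dR
      have e1 : G.IsHom dR dZ ((h ∘ Quotient.mk s) ∘ fun p => p.1.1) := hom_comp G h1 hm
      have e2 : G.IsHom dR dZ ((h ∘ Quotient.mk s) ∘ fun p => p.1.2) := hom_comp G h2 hm
      have := (huniq _ e1).trans (huniq _ e2).symm
      exact congrFun this ⟨(e, f), hR⟩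
    set U : Set Z := Set.range h with hU
    have hne : U.Nonempty := ⟨h (Quotient.mk s e), ⟨_, rfl⟩⟩
    let j : Z → ↥U := fun z => if hz : z ∈ U then ⟨z, hz⟩ else ⟨hne.choose, hne.choose_spec⟩
    let dU := G.rerouteStr dZ U j
    let h' : Quotient s → ↥U := fun q => ⟨h q, ⟨q, rfl⟩⟩
    have hjh : j ∘ h = h' := by
      funext q
      exact dif_pos ⟨q, rfl⟩
    have hh' : G.IsHom dQ dU h' := by
      intro q
      show G.map j (dZ (h q)) = G.map h' (dQ q)
      rw [hh q, ← hjh]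
      exact (congrFun (G.map_comp h j) (dQ q)).symm
    have hsurj : Function.Surjective h' := by
      rintro ⟨z, q, rfl⟩
      exact ⟨q, rfl⟩
    have hUC : C ↥U dU := himg _ dQ _ dU h' hQC hh' hsurj
    obtain ⟨k, hk, -⟩ := hQfinal _ dU hUC
    have hid : G.IsHom dQ dQ (id : Quotient s → Quotient s) := by
      intro q
      rw [G.map_id]
      rfl
    obtain ⟨w, -, hwuniq⟩ := hQfinal _ dQ hQC
    have hkh : k ∘ h' = id := (hwuniq _ (hom_comp G hh' hk)).trans (hwuniq _ hid).symm
    have hmk : Quotient.mk s e = Quotient.mk s f := by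
      have h3 : k (h' (Quotient.mk s e)) = k (h' (Quotient.mk s f)) := by
        congr 1
        exact Subtype.ext key
      have he := congrFun hkh (Quotient.mk s e)
      have hf := congrFun hkh (Quotient.mk s f)
      simp only [Function.comp_apply, id_eq] at he hf
      rw [← he, ← hf, h3]
    exact Quotient.exact hmk
end

section
/- Let X ∈ C_loc be a locally-C G-coalgebra, where every finite G-coalgebra in C admits a unique homomorphism into E/≡ and C is closed under intersections of finite subcoalgebras. Then the relation R = {(x, s_U(x)) | x ∈ U, U a finite subcoalgebra of X, s_U the unique homomorphism U → E/≡} is the graph of a function s : X → E/≡, and s is the unique G-coalgebra homomorphism from X to E/≡. -/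
universe u

/-- The class of locally-`C` coalgebras. -/
def SetFunctor.LocallyIn (G : SetFunctor.{u})
    (C : ∀ X : Type u, (X → G.obj X) → Prop)
    (X : Type u) (dX : X → G.obj X) : Prop :=
  (∀ x : X, ∃ (U : Set X) (dU : ↥U → G.obj ↥U),
      x ∈ U ∧ U.Finite ∧ G.IsHom dU dX Subtype.val) ∧
  (∀ (U : Set X) (dU : ↥U → G.obj ↥U),
      G.IsHom dU dX Subtype.val → U.Finite → C ↥U dU)


section Aux
variable (G : SetFunctor.{u})

theorem aux_hom_comp {A B D : Type u} {dA : A → G.obj A} {dB : B → G.obj B}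
    {dD : D → G.obj D} {f : A → B} {g : B → D}
    (hf : G.IsHom dA dB f) (hg : G.IsHom dB dD g) : G.IsHom dA dD (g ∘ f) := by
  intro a
  rw [Function.comp_apply, hg, hf, ← Function.comp_apply (f := G.map g), ← G.map_comp]

theorem aux_map_val_inj {X : Type u} {U : Set X} (hne : U.Nonempty) :
    Function.Injective (G.map (Subtype.val : ↥U → X)) := by
  haveI : Nonempty ↥U := hne.to_subtype
  classical
  let r : X → ↥U := fun x => if h : x ∈ U then ⟨x, h⟩ else Classical.arbitrary _
  have hr : r ∘ Subtype.val = id := by funext u; simp [r]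
  intro a b hab
  have h2 := congrArg (G.map r) hab
  rw [← Function.comp_apply (f := G.map r), ← Function.comp_apply (f := G.map r) (g := G.map Subtype.val),
      ← G.map_comp, hr, G.map_id] at h2
  exact h2

/-- If `W ⊆ U` are subcoalgebras of `X` (both homs to `X` via `val`) and `W` is
nonempty, then the inclusion `W → U` is a coalgebra homomorphism. -/
theorem aux_incl_hom {X : Type u} {dX : X → G.obj X} {U W : Set X}
    {dU : ↥U → G.obj ↥U} {dW : ↥W → G.obj ↥W}
    (hU : G.IsHom dU dX Subtype.val) (hW : G.IsHom dW dX Subtype.val)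
    (hsub : W ⊆ U) (hne : W.Nonempty) :
    G.IsHom dW dU (fun w => (⟨w.1, hsub w.2⟩ : ↥U)) := by
  intro w
  apply aux_map_val_inj G (hne.mono hsub)
  have h1 : G.map (Subtype.val : ↥U → X) (dU ⟨w.1, hsub w.2⟩) = dX w.1 :=
    (hU ⟨w.1, hsub w.2⟩).symm
  rw [h1, ← Function.comp_apply (f := G.map Subtype.val), ← G.map_comp]
  have : (Subtype.val ∘ fun w : ↥W => (⟨w.1, hsub w.2⟩ : ↥U)) = (Subtype.val : ↥W → X) := rfl
  rw [this, ← hW w]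

end Aux

/-- Gluing local solutions: for a locally-`C` coalgebra `X`, where every finite
coalgebra in `C` admits a unique homomorphism into `E/≡` (here `(Q, dQ)`), and
`C` is closed under intersections of finite subcoalgebras, the relation
`R = {(x, s_U(x)) | x ∈ U, U a finite subcoalgebra of X}` is the graph of a
function `s : X → Q`, and `s` is the unique coalgebra homomorphism `X → Q`. -/


theorem stmt18 (G : SetFunctor.{u})
    (C : ∀ X : Type u, (X → G.obj X) → Prop)
    (Q : Type u) (dQ : Q → G.obj Q)
    (X : Type u) (dX : X → G.obj X)
    (hXloc : G.LocallyIn C X dX)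
    (huniq : ∀ (Y : Type u) (dY : Y → G.obj Y), C Y dY → Finite Y →
        ∃! h : Y → Q, G.IsHom dY dQ h)
    (hint : ∀ (U V : Set X) (dU : ↥U → G.obj ↥U) (dV : ↥V → G.obj ↥V),
        G.IsHom dU dX Subtype.val → G.IsHom dV dX Subtype.val →
        U.Finite → V.Finite → C ↥U dU → C ↥V dV →
        ∃ dW : ↥(U ∩ V) → G.obj ↥(U ∩ V),
          G.IsHom dW dX Subtype.val ∧ C ↥(U ∩ V) dW) :
    ∃ sfun : X → Q,
      (∀ (x : X) (qv : Q),
        (∃ (U : Set X) (dU : ↥U → G.obj ↥U) (_ : G.IsHom dU dX Subtype.val)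
           (_ : U.Finite) (_ : C ↥U dU) (hx : x ∈ U) (sU : ↥U → Q),
           G.IsHom dU dQ sU ∧ sU ⟨x, hx⟩ = qv) ↔ sfun x = qv) ∧
      G.IsHom dX dQ sfun ∧
      ∀ s' : X → Q, G.IsHom dX dQ s' → s' = sfun := by

  classical
  -- agreement of local solutions
  have agree : ∀ (U V : Set X) (dU : ↥U → G.obj ↥U) (dV : ↥V → G.obj ↥V),
      G.IsHom dU dX Subtype.val → G.IsHom dV dX Subtype.val →
      U.Finite → V.Finite → ∀ (x : X) (hxU : x ∈ U) (hxV : x ∈ V)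
      (sU : ↥U → Q) (sV : ↥V → Q), G.IsHom dU dQ sU → G.IsHom dV dQ sV →
      sU ⟨x, hxU⟩ = sV ⟨x, hxV⟩ := by
    intro U V dU dV hU hV hUf hVf x hxU hxV sU sV hsU hsV
    obtain ⟨dW, hW, hCW⟩ := hint U V dU dV hU hV hUf hVf
      (hXloc.2 U dU hU hUf) (hXloc.2 V dV hV hVf)
    have hxW : x ∈ U ∩ V := ⟨hxU, hxV⟩
    have hne : (U ∩ V).Nonempty := ⟨x, hxW⟩
    have hWf : (U ∩ V).Finite := hUf.subset Set.inter_subset_left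
    haveI : Finite ↥(U ∩ V) := hWf
    have iU : G.IsHom dW dU (fun w => (⟨w.1, w.2.1⟩ : ↥U)) :=
      aux_incl_hom G hU hW Set.inter_subset_left hne
    have iV : G.IsHom dW dV (fun w => (⟨w.1, w.2.2⟩ : ↥V)) :=
      aux_incl_hom G hV hW Set.inter_subset_right hne
    have hU' : G.IsHom dW dQ (sU ∘ fun w => (⟨w.1, w.2.1⟩ : ↥U)) := aux_hom_comp G iU hsU
    have hV' : G.IsHom dW dQ (sV ∘ fun w => (⟨w.1, w.2.2⟩ : ↥V)) := aux_hom_comp G iV hsV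
    obtain ⟨h, -, huni⟩ := huniq ↥(U ∩ V) dW hCW ‹_›
    have e1 := huni _ hU'
    have e2 := huni _ hV'
    have := congrFun (e1.trans e2.symm) ⟨x, hxW⟩
    exact this
  -- existence and uniqueness of the value at each point
  have key : ∀ x : X, ∃! qv : Q,
      ∃ (U : Set X) (dU : ↥U → G.obj ↥U) (_ : G.IsHom dU dX Subtype.val)
        (_ : U.Finite) (_ : C ↥U dU) (hx : x ∈ U) (sU : ↥U → Q),
        G.IsHom dU dQ sU ∧ sU ⟨x, hx⟩ = qv := by
    intro x
    obtain ⟨U, dU, hxU, hUf, hU⟩ := hXloc.1 x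
    haveI : Finite ↥U := hUf
    obtain ⟨sU, hsU, -⟩ := huniq ↥U dU (hXloc.2 U dU hU hUf) ‹_›
    refine ⟨sU ⟨x, hxU⟩, ⟨U, dU, hU, hUf, hXloc.2 U dU hU hUf, hxU, sU, hsU, rfl⟩, ?_⟩
    rintro q ⟨V, dV, hV, hVf, -, hxV, sV, hsV, rfl⟩
    exact agree V U dV dU hV hU hVf hUf x hxV hxU sV sU hsV hsU
  choose sfun hsfun husfun using key
  refine ⟨sfun, ?_, ?_, ?_⟩
  · intro x qv
    constructor
    · intro h; exact (husfun x qv h).symm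
    · rintro rfl; exact hsfun x
  · -- sfun is a homomorphism
    intro x
    obtain ⟨U, dU, hU, hUf, hCU, hxU, sU, hsU, hval⟩ := hsfun x
    have hloc : ∀ u : ↥U, sfun u.1 = sU u := by
      intro u
      exact ((husfun u.1) _ ⟨U, dU, hU, hUf, hCU, u.2, sU, hsU, rfl⟩).symm
    have hcomp : (sfun ∘ (Subtype.val : ↥U → X)) = sU := funext fun u => hloc u
    calc dQ (sfun x) = dQ (sU ⟨x, hxU⟩) := by rw [hval]
      _ = G.map sU (dU ⟨x, hxU⟩) := hsU _
      _ = G.map (sfun ∘ Subtype.val) (dU ⟨x, hxU⟩) := by rw [hcomp]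
      _ = G.map sfun (G.map Subtype.val (dU ⟨x, hxU⟩)) := by
            rw [G.map_comp]; rfl
      _ = G.map sfun (dX x) := by rw [← hU ⟨x, hxU⟩]
  · -- uniqueness
    intro s' hs'
    funext x
    obtain ⟨U, dU, hU, hUf, hCU, hxU, sU, hsU, hval⟩ := hsfun x
    haveI : Finite ↥U := hUf
    have h1 : G.IsHom dU dQ (s' ∘ Subtype.val) := aux_hom_comp G hU hs'
    obtain ⟨h, -, huni⟩ := huniq ↥U dU hCU ‹_›
    have := congrFun ((huni _ h1).trans (huni _ hsU).symm) ⟨x, hxU⟩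
    rw [← hval]
    exact this
end
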